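/- arXiv:math/0404095 — 9 statements merged into one kernel-verified Lean document; each statement's English description precedes it below -/
import Mathlib

section
/- Let Y_1, ..., Y_n be random variables taking values in partially ordered sets which form a Markov chain (Y_1,...,Y_{k-1} independent of Y_{k+1},...,Y_n given Y_k for each k). Suppose for each k, Y_{k+1} is either stochastically increasing or stochastically decreasing in Y_k. Then Y_n is stochastically increasing in Y_1 if the number of indices k for which Y_{k+1} is stochastically decreasing in Y_k is even, and stochastically decreasing in Y_1 if that number is odd. -/
/-!
Stochastic dominance between two mass functions of the same total mass is tested against
monotone functions, by writing a monotone function as a constant plus a nonnegative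
combination of indicators of upper sets. Hence integrating a stochastically increasing kernel
preserves dominance and integrating a decreasing one reverses it. By the Markov property the law
of `Y_{k+1}` given `Y_0` is the law of `Y_k` given `Y_0` composed with the transition kernel
from `Y_k` to `Y_{k+1}` (Chapman–Kolmogorov), so by induction on `k` the direction of
monotonicity flips once per decreasing step.
-/

open Finset

def marg {n : ℕ} {α : Fin (n+1) → Type*} [∀ i, Fintype (α i)] [∀ i, DecidableEq (α i)]
    (p : (∀ i, α i) → ℝ) (i : Fin (n+1)) (a : α i) : ℝ :=
  ∑ ω ∈ univ.filter (fun ω => ω i = a), p ω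

def marg2 {n : ℕ} {α : Fin (n+1) → Type*} [∀ i, Fintype (α i)] [∀ i, DecidableEq (α i)]
    (p : (∀ i, α i) → ℝ) (i j : Fin (n+1)) (a : α i) (b : α j) : ℝ :=
  ∑ ω ∈ univ.filter (fun ω => ω i = a ∧ ω j = b), p ω

noncomputable def condLaw {n : ℕ} {α : Fin (n+1) → Type*} [∀ i, Fintype (α i)] [∀ i, DecidableEq (α i)]
    (p : (∀ i, α i) → ℝ) (i j : Fin (n+1)) (a : α i) : α j → ℝ :=
  fun b => marg2 p i j a b / marg p i a

def StochDom {β : Type*} [Fintype β] [PartialOrder β] (u v : β → ℝ) : Prop :=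
  ∀ A : Finset β, (∀ x ∈ A, ∀ y, x ≤ y → y ∈ A) → ∑ x ∈ A, v x ≤ ∑ x ∈ A, u x

section StochDom

variable {β : Type*} [Fintype β] [PartialOrder β] {u v : β → ℝ}

theorem StochDom.sum_mul_le_sum_mul_of_monotone (h : StochDom u v)
    (hmass : ∑ b, u b = ∑ b, v b) {f : β → ℝ} (hf : Monotone f) :
    ∑ b, v b * f b ≤ ∑ b, u b * f b := by
  classical
  -- induction on a finite set `s ∋ f b`: with `M = max s`, `M' = max (s \ {M})` we have
  -- `f = min f M' + (M - M') • 1[M ≤ f]`, and `{M ≤ f}` is an upper set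
  suffices key : ∀ (s : Finset ℝ) (f : β → ℝ), Monotone f → (∀ b, f b ∈ s) →
      ∑ b, v b * f b ≤ ∑ b, u b * f b from
    key _ f hf fun b => mem_image_of_mem f (mem_univ b)
  intro s
  induction s using Finset.induction_on_max with
  | empty => intro f _ hs; simp [isEmpty_iff.mpr fun b => by simpa using hs b]
  | insert M s hlt ih =>
    intro f hf hs
    rcases s.eq_empty_or_nonempty with rfl | hne
    · have hconst : ∀ b, f b = M := by simpa using hs
      simp only [hconst, ← sum_mul, hmass, le_refl]
    set M' := s.max' hne
    have hM' : M' < M := hlt _ (s.max'_mem hne)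
    set g : β → ℝ := fun b => min (f b) M'
    set A : Finset β := univ.filter fun b => M ≤ f b
    have hdecomp : ∀ w : β → ℝ,
        ∑ b, w b * f b = ∑ b, w b * g b + (M - M') * ∑ b ∈ A, w b := by
      intro w
      rw [sum_filter, mul_sum, ← sum_add_distrib]
      refine sum_congr rfl fun b _ => ?_
      rcases mem_insert.mp (hs b) with hb | hb
      · simp [g, hb, hM'.le]; ring
      · have hbM' : f b ≤ M' := s.le_max' _ hb
        simp [g, hbM', (hbM'.trans_lt hM').not_ge]
    have hg : ∀ b, g b ∈ s := fun b => by
      rcases mem_insert.mp (hs b) with hb | hb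
      · simpa [g, hb, hM'.le] using s.max'_mem hne
      · have hbM' : f b ≤ M' := s.le_max' _ hb
        simpa [g, hbM'] using hb
    have hA : ∑ b ∈ A, v b ≤ ∑ b ∈ A, u b :=
      h A fun x hx y hxy => by
        simp only [A, mem_filter, mem_univ, true_and] at hx ⊢
        exact hx.trans (hf hxy)
    rw [hdecomp u, hdecomp v]
    gcongr ?_ + ?_
    · exact ih g (fun x y hxy => min_le_min_right _ (hf hxy)) hg
    · exact mul_le_mul_of_nonneg_left hA (sub_nonneg.mpr hM'.le)

theorem StochDom.sum_mul_le_sum_mul_of_antitone (h : StochDom u v)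
    (hmass : ∑ b, u b = ∑ b, v b) {f : β → ℝ} (hf : Antitone f) :
    ∑ b, u b * f b ≤ ∑ b, v b * f b := by
  simpa using h.sum_mul_le_sum_mul_of_monotone hmass hf.neg

end StochDom

def StochMonotone {β γ : Type*} [PartialOrder β] [Fintype γ] [PartialOrder γ]
    (K : β → γ → ℝ) : Prop :=
  ∀ b b', b' ≤ b → StochDom (K b) (K b')

def StochAntitone {β γ : Type*} [PartialOrder β] [Fintype γ] [PartialOrder γ]
    (K : β → γ → ℝ) : Prop :=
  ∀ b b', b' ≤ b → StochDom (K b') (K b)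

section Bind

variable {β γ : Type*} [Fintype β] [PartialOrder β] [Fintype γ] [PartialOrder γ]
  {u v : β → ℝ} {K : β → γ → ℝ}

theorem StochDom.bind_of_stochMonotone (h : StochDom u v) (hmass : ∑ b, u b = ∑ b, v b)
    (hK : StochMonotone K) :
    StochDom (fun c => ∑ b, u b * K b c) (fun c => ∑ b, v b * K b c) := fun A hA => by
  simp only [sum_comm (s := A), ← mul_sum]
  exact h.sum_mul_le_sum_mul_of_monotone hmass fun b' b hb => hK b b' hb A hA

theorem StochDom.bind_of_stochAntitone (h : StochDom u v) (hmass : ∑ b, u b = ∑ b, v b)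
    (hK : StochAntitone K) :
    StochDom (fun c => ∑ b, v b * K b c) (fun c => ∑ b, u b * K b c) := fun A hA => by
  simp only [sum_comm (s := A), ← mul_sum]
  exact h.sum_mul_le_sum_mul_of_antitone hmass fun b' b hb => hK b b' hb A hA

end Bind

section Comp

variable {β γ δ : Type*} [PartialOrder β] [Fintype γ] [PartialOrder γ]
  [Fintype δ] [PartialOrder δ] {K : β → γ → ℝ} {L : γ → δ → ℝ}

theorem StochMonotone.comp (hK : StochMonotone K)
    (hmass : ∀ b b', ∑ c, K b c = ∑ c, K b' c) (hL : StochMonotone L) :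
    StochMonotone fun b d => ∑ c, K b c * L c d :=
  fun b b' hb => (hK b b' hb).bind_of_stochMonotone (hmass b b') hL

theorem StochMonotone.comp_stochAntitone (hK : StochMonotone K)
    (hmass : ∀ b b', ∑ c, K b c = ∑ c, K b' c) (hL : StochAntitone L) :
    StochAntitone fun b d => ∑ c, K b c * L c d :=
  fun b b' hb => (hK b b' hb).bind_of_stochAntitone (hmass b b') hL

theorem StochAntitone.comp_stochMonotone (hK : StochAntitone K)
    (hmass : ∀ b b', ∑ c, K b c = ∑ c, K b' c) (hL : StochMonotone L) :
    StochAntitone fun b d => ∑ c, K b c * L c d :=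
  fun b b' hb => (hK b b' hb).bind_of_stochMonotone (hmass b' b) hL

theorem StochAntitone.comp (hK : StochAntitone K)
    (hmass : ∀ b b', ∑ c, K b c = ∑ c, K b' c) (hL : StochAntitone L) :
    StochMonotone fun b d => ∑ c, K b c * L c d :=
  fun b b' hb => (hK b b' hb).bind_of_stochAntitone (hmass b' b) hL

end Comp

def glue {ι : Type*} [LinearOrder ι] {α : ι → Type*} (k : ι) (x y : ∀ i, α i) :
    ∀ i, α i :=
  fun i => if i ≤ k then x i else y i

theorem forall_le_and_forall_ge_iff_eq_glue {ι : Type*} [LinearOrder ι] {α : ι → Type*}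
    {k : ι} {x y ω : ∀ i, α i} :
    ((∀ i, i ≤ k → x i = ω i) ∧ (∀ i, k ≤ i → y i = ω i)) ↔
      x k = y k ∧ ω = glue k x y := by
  constructor
  · rintro ⟨hx, hy⟩
    refine ⟨(hx k le_rfl).trans (hy k le_rfl).symm, funext fun i => ?_⟩
    by_cases hi : i ≤ k
    · simp [glue, hi, hx i hi]
    · simp [glue, hi, hy i (le_of_not_ge hi)]
  · rintro ⟨hxy, rfl⟩
    refine ⟨fun i hi => by simp [glue, hi], fun i hi => ?_⟩
    rcases hi.lt_or_eq with hi | rfl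
    · simp [glue, hi.not_ge]
    · simp [glue, hxy]

section Marginals

variable {n : ℕ} {α : Fin (n+1) → Type*} [∀ i, Fintype (α i)] [∀ i, DecidableEq (α i)]
  (p : (∀ i, α i) → ℝ)

def MarkovAt (k : Fin (n+1)) : Prop :=
  ∀ ω, p ω * marg p k (ω k)
    = (∑ ω' ∈ univ.filter (fun ω' => ∀ i, i ≤ k → ω' i = ω i), p ω')
      * (∑ ω' ∈ univ.filter (fun ω' => ∀ i, k ≤ i → ω' i = ω i), p ω')

theorem markovAt_zero : MarkovAt p 0 := fun ω => by
  have hpast : univ.filter (fun ω' : ∀ i, α i => ∀ i, i ≤ 0 → ω' i = ω i)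
      = univ.filter (fun ω' => ω' 0 = ω 0) := filter_congr fun ω' _ => by simp
  have hfuture : univ.filter (fun ω' : ∀ i, α i => ∀ i, 0 ≤ i → ω' i = ω i) = {ω} := by
    ext ω'; simp [funext_iff]
  rw [hpast, hfuture, sum_singleton, marg, mul_comm]

def marg3 (i k j : Fin (n+1)) (a : α i) (c : α k) (b : α j) : ℝ :=
  ∑ ω ∈ univ.filter (fun ω => ω i = a ∧ ω k = c ∧ ω j = b), p ω

theorem sum_marg2 (i j : Fin (n+1)) (a : α i) : ∑ b, marg2 p i j a b = marg p i a := by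
  rw [marg, ← sum_fiberwise _ (fun ω : ∀ i, α i => ω j)]
  simp only [marg2, filter_filter]

theorem sum_marg3 (i k j : Fin (n+1)) (a : α i) (b : α j) :
    ∑ c, marg3 p i k j a c b = marg2 p i j a b := by
  rw [marg2, ← sum_fiberwise _ (fun ω : ∀ i, α i => ω k)]
  simp only [marg3, filter_filter]
  refine sum_congr rfl fun c _ => sum_congr (filter_congr fun ω _ => ?_) fun _ _ => rfl
  tauto

theorem sum_condLaw {i : Fin (n+1)} {a : α i} (h : marg p i a ≠ 0) (j : Fin (n+1)) :
    ∑ b, condLaw p i j a b = 1 := by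
  simp only [condLaw, ← sum_div, sum_marg2, div_self h]

theorem marg2_self (i : Fin (n+1)) (a b : α i) :
    marg2 p i i a b = if a = b then marg p i a else 0 := by
  split_ifs with hab
  · subst hab; simp [marg2, marg]
  · refine sum_eq_zero fun ω hω => ?_
    simp only [mem_filter, mem_univ, true_and] at hω
    exact absurd (hω.1.symm.trans hω.2) hab

theorem condLaw_self {i : Fin (n+1)} {a : α i} (h : marg p i a ≠ 0) (b : α i) :
    condLaw p i i a b = if a = b then 1 else 0 := by
  simp only [condLaw, marg2_self]
  split_ifs <;> simp [h]

theorem marg3_mul_marg_of_markovAt {k : Fin (n+1)} (hk : MarkovAt p k)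
    {i j : Fin (n+1)} (hik : i ≤ k) (hkj : k ≤ j) (a : α i) (c : α k) (b : α j) :
    marg3 p i k j a c b * marg p k c = marg2 p i k a c * marg2 p k j c b := by
  set S : Finset (∀ i, α i) := univ.filter fun ω => ω i = a ∧ ω k = c ∧ ω j = b
  set X : Finset (∀ i, α i) := univ.filter fun x => x i = a ∧ x k = c
  set Y : Finset (∀ i, α i) := univ.filter fun y => y k = c ∧ y j = b
  set past : (∀ i, α i) → Finset (∀ i, α i) :=
    fun ω => univ.filter fun x => ∀ l, l ≤ k → x l = ω l
  set future : (∀ i, α i) → Finset (∀ i, α i) :=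
    fun ω => univ.filter fun y => ∀ l, k ≤ l → y l = ω l
  -- a path through `c` at time `k` is the same as a pair (its past, its future) agreeing at `k`
  have hglue : ∀ ω xy, ω ∈ S ∧ xy ∈ past ω ×ˢ future ω ↔
      ω ∈ ({glue k xy.1 xy.2} : Finset _) ∧ xy ∈ X ×ˢ Y := by
    rintro ω ⟨x, y⟩
    simp only [S, X, Y, past, future, mem_filter, mem_univ, true_and, mem_product, mem_singleton]
    constructor
    · rintro ⟨⟨ha, hc, hb⟩, hx, hy⟩
      exact ⟨(forall_le_and_forall_ge_iff_eq_glue.mp ⟨hx, hy⟩).2,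
        ⟨(hx i hik).trans ha, (hx k le_rfl).trans hc⟩,
        (hy k le_rfl).trans hc, (hy j hkj).trans hb⟩
    · rintro ⟨rfl, ⟨ha, hc⟩, hc', hb⟩
      obtain ⟨hx, hy⟩ := forall_le_and_forall_ge_iff_eq_glue.mpr ⟨hc.trans hc'.symm, rfl⟩
      exact ⟨⟨(hx i hik).symm.trans ha, (hx k le_rfl).symm.trans hc,
        (hy j hkj).symm.trans hb⟩, hx, hy⟩
  calc marg3 p i k j a c b * marg p k c = ∑ ω ∈ S, p ω * marg p k (ω k) := by
        rw [marg3, sum_mul]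
        refine sum_congr rfl fun ω hω => ?_
        rw [(mem_filter.mp hω).2.2.1]
    _ = ∑ ω ∈ S, ∑ xy ∈ past ω ×ˢ future ω, p xy.1 * p xy.2 := by
        refine sum_congr rfl fun ω _ => ?_
        rw [hk ω, sum_mul_sum, sum_product]
    _ = ∑ xy ∈ X ×ˢ Y, ∑ ω ∈ ({glue k xy.1 xy.2} : Finset _), p xy.1 * p xy.2 :=
        sum_comm' hglue
    _ = marg2 p i k a c * marg2 p k j c b := by
        simp only [sum_singleton, sum_product, marg2, sum_mul_sum, X, Y]

theorem condLaw_eq_sum_condLaw_mul {i k j : Fin (n+1)} (hk : ∀ c, marg p k c ≠ 0)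
    (a : α i) (b : α j)
    (h : ∀ c, marg3 p i k j a c b * marg p k c = marg2 p i k a c * marg2 p k j c b) :
    condLaw p i j a b = ∑ c, condLaw p i k a c * condLaw p k j c b := by
  simp only [condLaw, ← sum_marg3 p i k j, sum_div]
  refine sum_congr rfl fun c _ => ?_
  rw [(eq_div_iff (hk c)).mpr (h c)]
  ring

theorem condLaw_zero_succ (hpos : ∀ i a, 0 < marg p i a)
    (hmarkov : ∀ k : Fin (n+1), 0 < (k : ℕ) → (k : ℕ) < n → MarkovAt p k) (i : Fin n) :
    condLaw p 0 i.succ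
      = fun a b => ∑ c, condLaw p 0 i.castSucc a c * condLaw p i.castSucc i.succ c b := by
  have hi : MarkovAt p i.castSucc := by
    rcases Nat.eq_zero_or_pos i with hi | hi
    · rw [show i.castSucc = 0 from Fin.ext hi]; exact markovAt_zero p
    · exact hmarkov _ hi i.isLt
  funext a b
  exact condLaw_eq_sum_condLaw_mul p (fun c => (hpos _ c).ne') a b
    (marg3_mul_marg_of_markovAt p hi (Fin.zero_le _) (Fin.castSucc_le_succ i) a · b)

theorem stochMonotone_condLaw_self [∀ i, PartialOrder (α i)] {i : Fin (n+1)}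
    (hpos : ∀ a, marg p i a ≠ 0) : StochMonotone (condLaw p i i) := by
  intro a a' ha A hA
  simp only [condLaw_self p (hpos _), sum_ite_eq]
  split_ifs with h' h
  exacts [le_rfl, absurd (hA a' h' a ha) h, zero_le_one, le_rfl]

end Marginals

def decCount {n : ℕ} (d : Fin n → Bool) (i : Fin (n+1)) : ℕ :=
  #{j | j.castSucc < i ∧ d j = true}

theorem decCount_succ {n : ℕ} (d : Fin n → Bool) (i : Fin n) :
    decCount d i.succ = decCount d i.castSucc + if d i = true then 1 else 0 := by
  simp only [decCount, Fin.castSucc_lt_succ_iff, Fin.castSucc_lt_castSucc_iff, le_iff_lt_or_eq,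
    or_and_right, filter_or]
  rw [card_union_of_disjoint (disjoint_filter.mpr fun j _ h h' => h.1.ne h'.1)]
  simp [filter_and, filter_eq', singleton_inter, apply_ite card]

theorem decCount_last {n : ℕ} (d : Fin n → Bool) :
    decCount d (Fin.last n) = #{j | d j = true} := by
  simp [decCount, Fin.castSucc_lt_last]

theorem condLaw_zero_stochMonotone_of_even_stochAntitone_of_odd
    {n : ℕ} {α : Fin (n+1) → Type*} [∀ i, Fintype (α i)] [∀ i, DecidableEq (α i)]
    [∀ i, PartialOrder (α i)] {p : (∀ i, α i) → ℝ} (hpos : ∀ i a, 0 < marg p i a)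
    (hmarkov : ∀ k : Fin (n+1), 0 < (k : ℕ) → (k : ℕ) < n → MarkovAt p k)
    {d : Fin n → Bool}
    (hinc : ∀ k, d k = false → StochMonotone (condLaw p k.castSucc k.succ))
    (hdec : ∀ k, d k = true → StochAntitone (condLaw p k.castSucc k.succ)) (i : Fin (n+1)) :
    (Even (decCount d i) → StochMonotone (condLaw p 0 i)) ∧
      (¬ Even (decCount d i) → StochAntitone (condLaw p 0 i)) := by
  induction i using Fin.induction with
  | zero => simp [decCount, stochMonotone_condLaw_self p fun a => (hpos 0 a).ne']
  | succ i ih =>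
    have hmass : ∀ a a', ∑ c, condLaw p 0 i.castSucc a c = ∑ c, condLaw p 0 i.castSucc a' c :=
      fun a a' => by rw [sum_condLaw p (hpos _ a).ne', sum_condLaw p (hpos _ a').ne']
    rw [condLaw_zero_succ p hpos hmarkov, decCount_succ]
    cases hd : d i
    · simp only [Bool.false_eq_true, if_false, add_zero]
      exact ⟨fun h => (ih.1 h).comp hmass (hinc i hd),
        fun h => (ih.2 h).comp_stochMonotone hmass (hinc i hd)⟩
    · simp only [if_true, Nat.even_add_one, not_not]
      exact ⟨fun h => (ih.2 h).comp hmass (hdec i hd),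
        fun h => (ih.1 h).comp_stochAntitone hmass (hdec i hd)⟩

theorem stmt_1_general (n : ℕ) (α : Fin (n+1) → Type*)
    [∀ i, Fintype (α i)] [∀ i, DecidableEq (α i)] [∀ i, PartialOrder (α i)]
    (p : (∀ i, α i) → ℝ)
    (hpos : ∀ (i : Fin (n+1)) (a : α i), 0 < marg p i a)
    (hmarkov : ∀ (k : Fin (n+1)), 0 < (k : ℕ) → (k : ℕ) < n → ∀ ω,
      p ω * marg p k (ω k)
        = (∑ ω' ∈ univ.filter (fun ω' => ∀ i, i ≤ k → ω' i = ω i), p ω')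
          * (∑ ω' ∈ univ.filter (fun ω' => ∀ i, k ≤ i → ω' i = ω i), p ω'))
    (d : Fin n → Bool)
    (hstep : ∀ (k : Fin n) (a a' : α k.castSucc), a' ≤ a →
      (d k = false →
        StochDom (condLaw p k.castSucc k.succ a) (condLaw p k.castSucc k.succ a')) ∧
      (d k = true →
        StochDom (condLaw p k.castSucc k.succ a') (condLaw p k.castSucc k.succ a))) :
    (Even (univ.filter (fun k => d k = true)).card →
      ∀ a a' : α 0, a' ≤ a →
        StochDom (condLaw p 0 (Fin.last n) a) (condLaw p 0 (Fin.last n) a')) ∧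
    (¬ Even (univ.filter (fun k => d k = true)).card →
      ∀ a a' : α 0, a' ≤ a →
        StochDom (condLaw p 0 (Fin.last n) a') (condLaw p 0 (Fin.last n) a)) := by
  have := condLaw_zero_stochMonotone_of_even_stochAntitone_of_odd hpos hmarkov
    (fun k hk a a' h => (hstep k a a' h).1 hk) (fun k hk a a' h => (hstep k a a' h).2 hk)
    (Fin.last n)
  rwa [decCount_last] at this

/-- Lemma 1 of the paper: for a Markov chain `Y_0, …, Y_n` on finite posets, where each
`Y_{k+1}` is stochastically increasing or decreasing in `Y_k` (recorded by `d k`), `Y_n`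
is stochastically increasing in `Y_0` if the number of decreasing steps is even, and
stochastically decreasing if it is odd. -/
theorem stmt_1 (n : ℕ) (α : Fin (n+1) → Type*)
    [∀ i, Fintype (α i)] [∀ i, DecidableEq (α i)] [∀ i, PartialOrder (α i)]
    (p : (∀ i, α i) → ℝ) (hnn : ∀ ω, 0 ≤ p ω) (hsum : ∑ ω, p ω = 1)
    (hpos : ∀ (i : Fin (n+1)) (a : α i), 0 < marg p i a)
    (hmarkov : ∀ (k : Fin (n+1)), 0 < (k : ℕ) → (k : ℕ) < n → ∀ ω,
      p ω * marg p k (ω k)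
        = (∑ ω' ∈ univ.filter (fun ω' => ∀ i, i ≤ k → ω' i = ω i), p ω')
          * (∑ ω' ∈ univ.filter (fun ω' => ∀ i, k ≤ i → ω' i = ω i), p ω'))
    (d : Fin n → Bool)
    (hstep : ∀ (k : Fin n) (a a' : α k.castSucc), a' ≤ a →
      (d k = false →
        StochDom (condLaw p k.castSucc k.succ a) (condLaw p k.castSucc k.succ a')) ∧
      (d k = true →
        StochDom (condLaw p k.castSucc k.succ a') (condLaw p k.castSucc k.succ a))) :
    (Even (univ.filter (fun k => d k = true)).card →
      ∀ a a' : α 0, a' ≤ a →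
        StochDom (condLaw p 0 (Fin.last n) a) (condLaw p 0 (Fin.last n) a')) ∧
    (¬ Even (univ.filter (fun k => d k = true)).card →
      ∀ a a' : α 0, a' ≤ a →
        StochDom (condLaw p 0 (Fin.last n) a') (condLaw p 0 (Fin.last n) a)) :=
  stmt_1_general n α p hpos hmarkov d hstep
end

section
/- Let μ be an exchangeable probability measure on {0,1}^n with rank sequence {a_k}, and let q_k = a_k / binom(n,k). Suppose {q_k} is log-concave with its nonzero terms forming an interval of indices (i.e., μ is ULC). Fix a weight λ > 0 and let μ' be the measure on {0,1}^{n-1} obtained by imposing the external field λ on the first coordinate (multiplying probabilities by λ^{η(1)} and renormalizing) and then projecting onto coordinates 2,...,n. Then μ' is exchangeable and its rank sequence is ULC; explicitly, the sequence q'_j = C(q_j + λ q_{j+1}) is log-concave. -/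
/-!
Summing over the two values of the tilted first coordinate, the marginal at a point of rank `j`
is proportional to `r j = q j + l * q (j + 1)`. Expanding `r j * r (j + 2) ≤ r (j + 1) ^ 2`, the
only cross term not controlled directly by the log-concavity of `q` is `q j * q (j + 3)`, which
is at most `q (j + 1) * q (j + 2)` by multiplying two consecutive log-concavity inequalities.
Interval support transfers because `r j > 0` exactly when `q j > 0` or `q (j + 1) > 0`.
-/

open Finset

/-- Number of coordinates equal to `true`. -/
def rankB {m : ℕ} (η : Fin m → Bool) : ℕ := (univ.filter (fun i => η i = true)).card

/-- A nonnegative sequence is log-concave with interval support. -/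
def LogConcaveSeq (q : ℕ → ℝ) : Prop :=
  (∀ j, q j * q (j + 2) ≤ q (j + 1) ^ 2) ∧
  (∀ i j k, i ≤ j → j ≤ k → 0 < q i → 0 < q k → 0 < q j)

lemma rankB_cons {m : ℕ} (b : Bool) (η : Fin m → Bool) :
    rankB (Fin.cons b η : Fin (m + 1) → Bool) = rankB η + b.toNat := by
  simp only [rankB, card_filter, Fin.sum_univ_succ, Fin.cons_zero, Fin.cons_succ]
  cases b <;> simp [add_comm]

lemma sum_mul_pos_of_sum_eq_one {α : Type*} [Fintype α] {w p : α → ℝ} {c : ℝ} (hc : 0 < c)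
    (hw : ∀ a, c ≤ w a) (hp : ∀ a, 0 ≤ p a) (hsum : ∑ a, p a = 1) : 0 < ∑ a, w a * p a :=
  calc 0 < c := hc
    _ = ∑ a, c * p a := by rw [← mul_sum, hsum, mul_one]
    _ ≤ ∑ a, w a * p a := sum_le_sum fun a _ => mul_le_mul_of_nonneg_right (hw a) (hp a)

namespace LogConcaveSeq

variable {q : ℕ → ℝ}

lemma mul_le_mul_add_three (hq : ∀ k, 0 ≤ q k) (hlc : LogConcaveSeq q) (j : ℕ) :
    q j * q (j + 3) ≤ q (j + 1) * q (j + 2) := by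
  rcases (mul_nonneg (hq j) (hq (j + 3))).eq_or_lt with hzero | hpos
  · rw [← hzero]
    exact mul_nonneg (hq _) (hq _)
  obtain ⟨hj, hj3⟩ : 0 < q j ∧ 0 < q (j + 3) :=
    ⟨pos_of_mul_pos_left hpos (hq _), pos_of_mul_pos_right hpos (hq _)⟩
  have hmid : 0 < q (j + 1) * q (j + 2) :=
    mul_pos (hlc.2 j _ _ (by omega) (by omega) hj hj3) (hlc.2 j _ _ (by omega) (by omega) hj hj3)
  have h₁ : q j * q (j + 2) ≤ q (j + 1) ^ 2 := hlc.1 j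
  have h₂ : q (j + 1) * q (j + 3) ≤ q (j + 2) ^ 2 := hlc.1 (j + 1)
  have hprod : (q j * q (j + 3)) * (q (j + 1) * q (j + 2))
      ≤ (q (j + 1) * q (j + 2)) * (q (j + 1) * q (j + 2)) := by
    nlinarith [mul_le_mul h₁ h₂ (mul_nonneg (hq (j + 1)) (hq (j + 3))) (sq_nonneg (q (j + 1)))]
  exact le_of_mul_le_mul_right hprod hmid

lemma add_mul_succ_sq_le (hq : ∀ k, 0 ≤ q k) (hlc : LogConcaveSeq q) {l : ℝ} (hl : 0 ≤ l)
    (j : ℕ) :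
    (q j + l * q (j + 1)) * (q (j + 2) + l * q (j + 3)) ≤ (q (j + 1) + l * q (j + 2)) ^ 2 := by
  have h₀ : q j * q (j + 2) ≤ q (j + 1) ^ 2 := hlc.1 j
  have h₁ : q (j + 1) * q (j + 3) ≤ q (j + 2) ^ 2 := hlc.1 (j + 1)
  have h₂ := mul_le_mul_add_three hq hlc j
  nlinarith [mul_le_mul_of_nonneg_left h₂ hl, mul_le_mul_of_nonneg_left h₁ (mul_self_nonneg l)]

lemma add_mul_succ_pos_of_le_of_le (hq : ∀ k, 0 ≤ q k) (hlc : LogConcaveSeq q) {l : ℝ}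
    (hl : 0 < l) {i j k : ℕ} (hij : i ≤ j) (hjk : j ≤ k)
    (hi : 0 < q i + l * q (i + 1)) (hk : 0 < q k + l * q (k + 1)) :
    0 < q j + l * q (j + 1) := by
  have hwitness : ∀ m, 0 < q m + l * q (m + 1) → ∃ a, m ≤ a ∧ a ≤ m + 1 ∧ 0 < q a := by
    intro m hm
    by_contra! h
    have h₀ := le_antisymm (h m le_rfl (by omega)) (hq m)
    have h₁ := le_antisymm (h (m + 1) (by omega) le_rfl) (hq (m + 1))
    simp [h₀, h₁] at hm
  rcases hjk.eq_or_lt with rfl | hjk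
  · exact hk
  obtain ⟨a, hia, hai, ha⟩ := hwitness i hi
  obtain ⟨b, hkb, -, hb⟩ := hwitness k hk
  have hsucc : 0 < q (j + 1) := hlc.2 a _ b (by omega) (by omega) ha hb
  nlinarith [hq j]

lemma add_mul_succ (hq : ∀ k, 0 ≤ q k) (hlc : LogConcaveSeq q) {l : ℝ} (hl : 0 < l) :
    LogConcaveSeq (fun j => q j + l * q (j + 1)) :=
  ⟨add_mul_succ_sq_le hq hlc hl.le,
    fun _ _ _ hij hjk hi hk => add_mul_succ_pos_of_le_of_le hq hlc hl hij hjk hi hk⟩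

end LogConcaveSeq

lemma tilted_cons_true_add_cons_false {n : ℕ} (q : ℕ → ℝ) (l : ℝ) (η' : Fin n → Bool) :
    (if (Fin.cons true η' : Fin (n + 1) → Bool) 0 = true then l else 1)
        * q (rankB (Fin.cons true η' : Fin (n + 1) → Bool))
      + (if (Fin.cons false η' : Fin (n + 1) → Bool) 0 = true then l else 1)
        * q (rankB (Fin.cons false η' : Fin (n + 1) → Bool))
      = q (rankB η') + l * q (rankB η' + 1) := by
  simp only [rankB_cons, Fin.cons_zero, Bool.toNat_true, Bool.toNat_false, add_zero,
    if_true, Bool.false_eq_true, if_false, one_mul]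
  ring

theorem stmt_3_general (n : ℕ) (q : ℕ → ℝ) (l : ℝ) (hl : 0 < l)
    (hq : ∀ k, 0 ≤ q k)
    (hlc : LogConcaveSeq q)
    (hprob : ∑ η : Fin (n+1) → Bool, q (rankB η) = 1) :
    (∃ C : ℝ, 0 < C ∧ ∀ η' : Fin n → Bool,
      ((if (Fin.cons true η' : Fin (n+1) → Bool) 0 = true then l else 1)
          * q (rankB (Fin.cons true η' : Fin (n+1) → Bool))
        + (if (Fin.cons false η' : Fin (n+1) → Bool) 0 = true then l else 1)
          * q (rankB (Fin.cons false η' : Fin (n+1) → Bool)))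
        / (∑ η : Fin (n+1) → Bool, (if η 0 = true then l else 1) * q (rankB η))
      = C * (q (rankB η') + l * q (rankB η' + 1))) ∧
    LogConcaveSeq (fun j => q j + l * q (j + 1)) := by
  have hZ : 0 < ∑ η : Fin (n+1) → Bool, (if η 0 = true then l else 1) * q (rankB η) :=
    sum_mul_pos_of_sum_eq_one (lt_min hl one_pos)
      (fun η => by split_ifs <;> simp) (fun η => hq _) hprob
  refine ⟨⟨_, inv_pos.2 hZ, fun η' => ?_⟩, hlc.add_mul_succ hq hl⟩
  rw [tilted_cons_true_add_cons_false, div_eq_inv_mul]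

/-- Let `μ` be the exchangeable measure on `{0,1}^{n+1}` assigning probability `q k` to
each point of rank `k`, with `{q k} = {a_k / binom(n+1,k)}` log-concave with interval
support (ULC).  Imposing the external field `l > 0` on coordinate `0` and projecting onto
the remaining `n` coordinates yields an exchangeable measure `μ'` whose atom probabilities
are proportional to `q j + l * q (j+1)` at rank `j`, and this sequence is again
log-concave with interval support (so `μ'` is ULC). -/
theorem stmt_3 (n : ℕ) (q : ℕ → ℝ) (l : ℝ) (hl : 0 < l)
    (hq : ∀ k, 0 ≤ q k) (hsupp : ∀ k, n + 1 < k → q k = 0)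
    (hlc : LogConcaveSeq q)
    (hprob : ∑ η : Fin (n+1) → Bool, q (rankB η) = 1) :
    (∃ C : ℝ, 0 < C ∧ ∀ η' : Fin n → Bool,
      ((if (Fin.cons true η' : Fin (n+1) → Bool) 0 = true then l else 1)
          * q (rankB (Fin.cons true η' : Fin (n+1) → Bool))
        + (if (Fin.cons false η' : Fin (n+1) → Bool) 0 = true then l else 1)
          * q (rankB (Fin.cons false η' : Fin (n+1) → Bool)))
        / (∑ η : Fin (n+1) → Bool, (if η 0 = true then l else 1) * q (rankB η))
      = C * (q (rankB η') + l * q (rankB η' + 1))) ∧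
    LogConcaveSeq (fun j => q j + l * q (j + 1)) :=
  stmt_3_general n q l hl hq hlc hprob
end

section
/- Let {a_n}, {b_n}, {c_n} be finite sequences of nonnegative reals with a_i b_j c_{i+j} not identically zero, and let (X,Y) be a pair of integer-valued random variables with P(X=i, Y=j) = K a_i b_j c_{i+j} for a normalizing constant K. If {b_n} is log-concave (with interval support), then X is stochastically increasing in X+Y: for each k with P(X+Y=k), P(X+Y=k+1) > 0, the conditional law of X given X+Y=k+1 stochastically dominates the conditional law of X given X+Y=k. -/
open Finset

/-!
Conditioned on `X + Y = k`, the law of `X` has weights `aᵢ b_{k-i} c_k`. The likelihood ratio of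
the law given `X + Y = k + 1` against it is proportional to `aᵢ b_{k+1-i} / (aᵢ b_{k-i})`, which is
increasing in `i` because log-concavity of `b` makes `b_{m+1} / b_m` decreasing in `m`. An
increasing likelihood ratio implies stochastic domination: for a threshold `t`, the products of
"tail mass of one law" and "head mass of the other" compare termwise.
-/

theorem LogConcaveSeq.mul_le_mul_of_le {b : ℕ → ℝ} (hb : ∀ i, 0 ≤ b i) (hlc : LogConcaveSeq b)
    {m n : ℕ} (hmn : m ≤ n) : b m * b (n + 1) ≤ b (m + 1) * b n := by
  induction n, hmn using Nat.le_induction with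
  | base => rw [mul_comm]
  | succ n hmn ih =>
    rcases (hb m).eq_or_lt with hm | hm
    · rw [← hm, zero_mul]
      exact mul_nonneg (hb _) (hb _)
    rcases (hb (n + 2)).eq_or_lt with hn | hn
    · rw [← hn, mul_zero]
      exact mul_nonneg (hb _) (hb _)
    have hpos : ∀ j, m ≤ j → j ≤ n + 2 → 0 < b j := fun j h₁ h₂ => hlc.2 m j (n + 2) h₁ h₂ hm hn
    -- Multiply the induction hypothesis by `b n * b (n + 2) ≤ b (n + 1) ^ 2` and cancel.
    refine le_of_mul_le_mul_right ?_
      (mul_pos (hpos n hmn (by omega)) (hpos (n + 1) (by omega) (by omega)))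
    calc b m * b (n + 1 + 1) * (b n * b (n + 1))
        = (b m * b (n + 1)) * (b n * b (n + 2)) := by ring
      _ ≤ (b (m + 1) * b n) * b (n + 1) ^ 2 :=
          mul_le_mul ih (hlc.1 n) (mul_nonneg (hb _) (hb _)) (mul_nonneg (hb _) (hb _))
      _ = b (m + 1) * b (n + 1) * (b n * b (n + 1)) := by ring

theorem tail_div_sum_le_of_likelihoodRatio_mono {α : Type*} [LinearOrder α] (s : Finset α)
    (μ ν : α → ℝ) (hratio : ∀ i ∈ s, ∀ j ∈ s, j < i → ν i * μ j ≤ μ i * ν j)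
    (hν : 0 < ∑ i ∈ s, ν i) (hμ : 0 < ∑ i ∈ s, μ i) (t : α) :
    (∑ i ∈ s.filter (fun i => t ≤ i), ν i) / (∑ i ∈ s, ν i)
      ≤ (∑ i ∈ s.filter (fun i => t ≤ i), μ i) / (∑ i ∈ s, μ i) := by
  rw [div_le_div_iff₀ hν hμ, ← sum_filter_add_sum_filter_not s (fun i => t ≤ i) ν,
    ← sum_filter_add_sum_filter_not s (fun i => t ≤ i) μ]
  have hcross : (∑ i ∈ s.filter (fun i => t ≤ i), ν i) * (∑ j ∈ s.filter (fun i => ¬t ≤ i), μ j)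
      ≤ (∑ i ∈ s.filter (fun i => t ≤ i), μ i) * (∑ j ∈ s.filter (fun i => ¬t ≤ i), ν j) := by
    rw [sum_mul_sum, sum_mul_sum]
    refine sum_le_sum fun i hi => sum_le_sum fun j hj => ?_
    rw [mem_filter] at hi hj
    exact hratio i hi.1 j hj.1 (lt_of_not_ge hj.2 |>.trans_le hi.2)
  linear_combination hcross

theorem abc_weight_cross_le {a b c : ℕ → ℝ} (ha : ∀ i, 0 ≤ a i) (hb : ∀ i, 0 ≤ b i)
    (hc : ∀ i, 0 ≤ c i) (hblc : LogConcaveSeq b) {i j k : ℕ} (hji : j < i) (hik : i ≤ k) :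
    a i * b (k - i) * c k * (a j * b (k + 1 - j) * c (k + 1))
      ≤ a i * b (k + 1 - i) * c (k + 1) * (a j * b (k - j) * c k) := by
  have hb_ratio := hblc.mul_le_mul_of_le hb (show k - i ≤ k - j by omega)
  rw [show k - j + 1 = k + 1 - j by omega, show k - i + 1 = k + 1 - i by omega] at hb_ratio
  have hac : 0 ≤ a i * a j * c k * c (k + 1) :=
    mul_nonneg (mul_nonneg (mul_nonneg (ha i) (ha j)) (hc k)) (hc (k + 1))
  linear_combination mul_le_mul_of_nonneg_left hb_ratio hac

/-- Lemma (abc), part (i): if `P(X=i, Y=j) = K aᵢ bⱼ c_{i+j}` with `b` log-concave, then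
`X` is stochastically increasing in `X+Y`: the conditional law of `X` given `X+Y = k+1`
(with weights `i ↦ aᵢ b_{k+1-i} c_{k+1}`) stochastically dominates the conditional law of
`X` given `X+Y = k` (with weights `i ↦ aᵢ b_{k-i} c_k`), whenever both conditioning events
have positive probability. -/
theorem stmt_5 (a b c : ℕ → ℝ)
    (ha : ∀ i, 0 ≤ a i) (hb : ∀ i, 0 ≤ b i) (hc : ∀ i, 0 ≤ c i)
    (hblc : LogConcaveSeq b) (k : ℕ)
    (hk : 0 < ∑ i ∈ Finset.range (k+1), a i * b (k - i) * c k)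
    (hk1 : 0 < ∑ i ∈ Finset.range (k+2), a i * b (k+1 - i) * c (k+1)) :
    ∀ t : ℕ,
      (∑ i ∈ (Finset.range (k+1)).filter (fun i => t ≤ i), a i * b (k - i) * c k)
          / (∑ i ∈ Finset.range (k+1), a i * b (k - i) * c k)
        ≤ (∑ i ∈ (Finset.range (k+2)).filter (fun i => t ≤ i), a i * b (k+1 - i) * c (k+1))
          / (∑ i ∈ Finset.range (k+2), a i * b (k+1 - i) * c (k+1)) := by
  intro t
  -- Extend the weights given `X + Y = k` by zero, so that both laws live on `range (k + 2)`;
  -- the guard matters since `k - (k + 1) = 0` in `ℕ`.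
  set ν : ℕ → ℝ := fun i => if i ≤ k then a i * b (k - i) * c k else 0 with hν
  have hν_sum : ∑ i ∈ range (k + 2), ν i = ∑ i ∈ range (k + 1), a i * b (k - i) * c k := by
    rw [hν, ← sum_filter]
    congr 1; ext i; simp only [mem_filter, mem_range]; omega
  have hν_tail : ∑ i ∈ (range (k + 2)).filter (fun i => t ≤ i), ν i
      = ∑ i ∈ (range (k + 1)).filter (fun i => t ≤ i), a i * b (k - i) * c k := by
    rw [hν, ← sum_filter]
    congr 1; ext i; simp only [mem_filter, mem_range]; omega
  rw [← hν_sum, ← hν_tail]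
  refine tail_div_sum_le_of_likelihoodRatio_mono _ _ ν (fun i _ j _ hji => ?_)
    (hν_sum ▸ hk) hk1 t
  by_cases hik : i ≤ k
  · simp only [hν, if_pos hik, if_pos (hji.le.trans hik)]
    exact abc_weight_cross_le ha hb hc hblc hji hik
  · have hw : ∀ i j l, 0 ≤ a i * b j * c l := fun i j l =>
      mul_nonneg (mul_nonneg (ha i) (hb j)) (hc l)
    simp only [hν, if_neg hik, zero_mul]
    exact mul_nonneg (hw _ _ _) (by split_ifs; exacts [hw _ _ _, le_rfl])
end

section
/- Let {a_n}, {b_n}, {c_n} be finite sequences of nonnegative reals and (X,Y) integer-valued with P(X=i, Y=j) = K a_i b_j c_{i+j}. If {c_n} is log-concave (with interval support), then X is stochastically decreasing in Y: for each j with both conditioning events of positive probability, the conditional law of X given Y=j stochastically dominates the conditional law of X given Y=j+1. -/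
/-!
The conditional weights of `X` given `Y = j` and given `Y = j + 1` have likelihood ratio
proportional to `c (i + j) / c (i + j + 1)`, which log-concavity makes increasing in `i`;
a monotone likelihood ratio implies stochastic domination, via the cross-multiplied form
`g i * f i' ≤ f i * g i'` so that zero weights need no special care.
-/

open Finset

theorem LogConcaveSeq.mul_succ_le_succ_mul {c : ℕ → ℝ} (hc : ∀ i, 0 ≤ c i)
    (hlc : LogConcaveSeq c) {m n : ℕ} (hmn : m ≤ n) :
    c m * c (n + 1) ≤ c (m + 1) * c n := by
  induction n, hmn using Nat.le_induction with
  | base => rw [mul_comm]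
  | succ n _ ih =>
    rcases (hc (n + 1)).lt_or_eq with hpos | hzero
    · refine le_of_mul_le_mul_right ?_ hpos
      calc c m * c (n + 2) * c (n + 1) = c m * c (n + 1) * c (n + 2) := by ring
        _ ≤ c (m + 1) * c n * c (n + 2) := mul_le_mul_of_nonneg_right ih (hc _)
        _ = c (m + 1) * (c n * c (n + 2)) := by ring
        _ ≤ c (m + 1) * c (n + 1) ^ 2 := mul_le_mul_of_nonneg_left (hlc.1 n) (hc _)
        _ = c (m + 1) * c (n + 1) * c (n + 1) := by ring
    · have hend : c m = 0 ∨ c (n + 2) = 0 := by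
        by_contra! h
        exact (hlc.2 m (n + 1) (n + 2) (by omega) (by omega) ((hc m).lt_of_ne' h.1)
          ((hc _).lt_of_ne' h.2)).ne' hzero.symm
      rw [← hzero, mul_zero]
      rcases hend with h | h <;> simp [h]

theorem sum_filter_le_div_le_of_mul_le_mul {α : Type*} [LinearOrder α] (s : Finset α)
    (f g : α → ℝ) (hf : 0 < ∑ i ∈ s, f i) (hg : 0 < ∑ i ∈ s, g i)
    (hratio : ∀ i ∈ s, ∀ i' ∈ s, i' ≤ i → g i * f i' ≤ f i * g i') (t : α) :
    (∑ i ∈ s with t ≤ i, g i) / ∑ i ∈ s, g i ≤ (∑ i ∈ s with t ≤ i, f i) / ∑ i ∈ s, f i := by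
  have hcross : (∑ i ∈ s with t ≤ i, g i) * ∑ i ∈ s with ¬t ≤ i, f i ≤
      (∑ i ∈ s with t ≤ i, f i) * ∑ i ∈ s with ¬t ≤ i, g i := by
    rw [sum_mul_sum, sum_mul_sum]
    refine sum_le_sum fun i hi => sum_le_sum fun i' hi' => ?_
    rw [mem_filter] at hi hi'
    exact hratio i hi.1 i' hi'.1 ((not_le.mp hi'.2).le.trans hi.2)
  rw [div_le_div_iff₀ hg hf, ← sum_filter_add_sum_filter_not s (t ≤ ·) f,
    ← sum_filter_add_sum_filter_not s (t ≤ ·) g]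
  linear_combination hcross

theorem stmt_6_general (N : ℕ) (a b c : ℕ → ℝ)
    (ha : ∀ i, 0 ≤ a i) (hb : ∀ i, 0 ≤ b i) (hc : ∀ i, 0 ≤ c i)
    (hclc : LogConcaveSeq c) (j : ℕ)
    (hj : 0 < ∑ i ∈ Finset.range (N+1), a i * b j * c (i + j))
    (hj1 : 0 < ∑ i ∈ Finset.range (N+1), a i * b (j+1) * c (i + (j+1))) :
    ∀ t : ℕ,
      (∑ i ∈ (Finset.range (N+1)).filter (fun i => t ≤ i), a i * b (j+1) * c (i + (j+1)))
          / (∑ i ∈ Finset.range (N+1), a i * b (j+1) * c (i + (j+1)))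
        ≤ (∑ i ∈ (Finset.range (N+1)).filter (fun i => t ≤ i), a i * b j * c (i + j))
          / (∑ i ∈ Finset.range (N+1), a i * b j * c (i + j)) := by
  refine sum_filter_le_div_le_of_mul_le_mul _ _ _ hj hj1 fun i _ i' _ hi'i => ?_
  have hlc : c (i' + j) * c (i + (j + 1)) ≤ c (i' + (j + 1)) * c (i + j) :=
    hclc.mul_succ_le_succ_mul (m := i' + j) (n := i + j) hc (by omega)
  calc a i * b (j + 1) * c (i + (j + 1)) * (a i' * b j * c (i' + j))
      = a i * a i' * (b j * b (j + 1)) * (c (i' + j) * c (i + (j + 1))) := by ring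
    _ ≤ a i * a i' * (b j * b (j + 1)) * (c (i' + (j + 1)) * c (i + j)) :=
        mul_le_mul_of_nonneg_left hlc
          (mul_nonneg (mul_nonneg (ha i) (ha i')) (mul_nonneg (hb j) (hb (j + 1))))
    _ = a i * b j * c (i + j) * (a i' * b (j + 1) * c (i' + (j + 1))) := by ring

/-- Lemma (abc), part (iii): if `P(X=i, Y=j) = K aᵢ bⱼ c_{i+j}` with `c` log-concave, then
`X` is stochastically decreasing in `Y`: the conditional law of `X` given `Y = j` (with
weights `i ↦ aᵢ bⱼ c_{i+j}`) stochastically dominates the conditional law of `X` given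
`Y = j+1`, whenever both conditioning events have positive probability.  Here `a` is
supported on `{0, …, N}`. -/
theorem stmt_6 (N : ℕ) (a b c : ℕ → ℝ)
    (ha : ∀ i, 0 ≤ a i) (hb : ∀ i, 0 ≤ b i) (hc : ∀ i, 0 ≤ c i)
    (hsupp : ∀ i, N < i → a i = 0)
    (hclc : LogConcaveSeq c) (j : ℕ)
    (hj : 0 < ∑ i ∈ Finset.range (N+1), a i * b j * c (i + j))
    (hj1 : 0 < ∑ i ∈ Finset.range (N+1), a i * b (j+1) * c (i + (j+1))) :
    ∀ t : ℕ,
      (∑ i ∈ (Finset.range (N+1)).filter (fun i => t ≤ i), a i * b (j+1) * c (i + (j+1)))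
          / (∑ i ∈ Finset.range (N+1), a i * b (j+1) * c (i + (j+1)))
        ≤ (∑ i ∈ (Finset.range (N+1)).filter (fun i => t ≤ i), a i * b j * c (i + j))
          / (∑ i ∈ Finset.range (N+1), a i * b j * c (i + j)) :=
  stmt_6_general N a b c ha hb hc hclc j hj hj1
end

section
/- Let {a_n}, {b_n}, {c_n} be finite sequences of nonnegative reals and (X,Y) integer-valued with P(X=i, Y=j) = K a_i b_j c_{i+j}. If {b_n} is log-concave (with interval support), then X+Y is stochastically increasing in X: the conditional law of X+Y given X=k+1 stochastically dominates the conditional law of X+Y given X=k (whenever both conditionings are valid). -/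
open Finset

/-- Key consequence of log-concavity with interval support:
`b u * b (u+d+1) ≤ b (u+1) * b (u+d)`. -/
lemma logConcave_cross (b : ℕ → ℝ) (hb : ∀ i, 0 ≤ b i) (hblc : LogConcaveSeq b) :
    ∀ d u, b u * b (u + d + 1) ≤ b (u + 1) * b (u + d) := by
  intro d
  induction d with
  | zero => intro u; simp [mul_comm]
  | succ d ih =>
    intro u
    have goal_eq1 : u + (d + 1) + 1 = u + d + 2 := by omega
    have goal_eq2 : u + (d + 1) = u + d + 1 := by omega
    rw [goal_eq1, goal_eq2]
    rcases (hb (u + d)).eq_or_lt with h0 | hpos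
    · -- b (u+d) = 0
      rcases (hb u).eq_or_lt with hu0 | hu
      · rw [← hu0, zero_mul]
        exact mul_nonneg (hb _) (hb _)
      rcases (hb (u + d + 2)).eq_or_lt with hv0 | hv
      · rw [← hv0, mul_zero]
        exact mul_nonneg (hb _) (hb _)
      · exact absurd (hblc.2 u (u + d) (u + d + 2) (by omega) (by omega) hu hv)
          (by rw [← h0]; exact lt_irrefl 0)
    · have h1 := hblc.1 (u + d)
      have h2 := ih u
      have key : b (u + d) * (b u * b (u + d + 2)) ≤ b (u + d) * (b (u + 1) * b (u + d + 1)) := by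
        nlinarith [mul_le_mul_of_nonneg_left h1 (hb u),
          mul_le_mul_of_nonneg_right h2 (hb (u + d + 1)), hb u, hb (u + d + 1)]
      exact le_of_mul_le_mul_left key hpos

lemma logConcave_cross' (b : ℕ → ℝ) (hb : ∀ i, 0 ≤ b i) (hblc : LogConcaveSeq b)
    {m n : ℕ} (h : n + 2 ≤ m) : b m * b n ≤ b (n + 1) * b (m - 1) := by
  obtain ⟨e, rfl⟩ : ∃ e, m = n + 2 + e := ⟨m - (n + 2), by omega⟩
  have h1 := logConcave_cross b hb hblc (e + 1) n
  have e1 : n + (e + 1) + 1 = n + 2 + e := by omega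
  have e2 : n + (e + 1) = n + 2 + e - 1 := by omega
  rw [e1, e2] at h1
  linarith [h1]

/-- Lemma (abc), part (ii): if `P(X=i, Y=j) = K aᵢ bⱼ c_{i+j}` with `b` log-concave, then
`X+Y` is stochastically increasing in `X`: the conditional law of `X+Y` given `X = k+1`
(value `k+1+m` carrying weight `a_{k+1} b_m c_{k+1+m}`) stochastically dominates the
conditional law of `X+Y` given `X = k` (value `k+m` with weight `a_k b_m c_{k+m}`),
whenever both conditionings are valid.  Here `b` is supported on `{0, …, N}`. -/
theorem stmt_7 (N : ℕ) (a b c : ℕ → ℝ)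
    (ha : ∀ i, 0 ≤ a i) (hb : ∀ i, 0 ≤ b i) (hc : ∀ i, 0 ≤ c i)
    (hsupp : ∀ m, N < m → b m = 0)
    (hblc : LogConcaveSeq b) (k : ℕ)
    (hk : 0 < ∑ m ∈ Finset.range (N+1), a k * b m * c (k + m))
    (hk1 : 0 < ∑ m ∈ Finset.range (N+1), a (k+1) * b m * c (k+1 + m)) :
    ∀ t : ℕ,
      (∑ m ∈ (Finset.range (N+1)).filter (fun m => t ≤ k + m), a k * b m * c (k + m))
          / (∑ m ∈ Finset.range (N+1), a k * b m * c (k + m))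
        ≤ (∑ m ∈ (Finset.range (N+1)).filter (fun m => t ≤ k+1 + m),
              a (k+1) * b m * c (k+1 + m))
          / (∑ m ∈ Finset.range (N+1), a (k+1) * b m * c (k+1 + m)) := by
  intro t
  set r := Finset.range (N + 1) with hr
  set g : ℕ → ℝ := fun m => b m * c (k + m) with hg
  set h : ℕ → ℝ := fun n => b n * c (k + 1 + n) with hh
  have hgnn : ∀ m, 0 ≤ g m := fun m => mul_nonneg (hb m) (hc _)
  have hhnn : ∀ n, 0 ≤ h n := fun n => mul_nonneg (hb n) (hc _)
  -- factor out a k and a (k+1)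
  have egA : ∀ s : Finset ℕ, (∑ m ∈ s, a k * b m * c (k + m)) = a k * ∑ m ∈ s, g m := by
    intro s; rw [Finset.mul_sum]; exact Finset.sum_congr rfl (fun m _ => by simp [hg]; ring)
  have egB : ∀ s : Finset ℕ, (∑ m ∈ s, a (k+1) * b m * c (k+1 + m)) = a (k+1) * ∑ m ∈ s, h m := by
    intro s; rw [Finset.mul_sum]; exact Finset.sum_congr rfl (fun m _ => by simp [hh]; ring)
  rw [egA, egA, egB, egB] at *
  have hak : 0 < a k := by
    rcases (ha k).eq_or_lt with h0 | h0
    · rw [← h0, zero_mul] at hk; exact absurd hk (lt_irrefl 0)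
    · exact h0
  have hak1 : 0 < a (k+1) := by
    rcases (ha (k+1)).eq_or_lt with h0 | h0
    · rw [← h0, zero_mul] at hk1; exact absurd hk1 (lt_irrefl 0)
    · exact h0
  have hA : 0 < ∑ m ∈ r, g m := by
    by_contra hA'; push_neg at hA'; nlinarith
  have hB : 0 < ∑ n ∈ r, h n := by
    by_contra hB'; push_neg at hB'; nlinarith
  rw [mul_div_mul_left _ _ (ne_of_gt hak), mul_div_mul_left _ _ (ne_of_gt hak1),
    div_le_div_iff₀ hA hB]
  -- reduce to a cross-term inequality over pairs
  set w : ℕ × ℕ → ℝ := fun p => g p.1 * h p.2 with hw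
  have hwnn : ∀ p : ℕ × ℕ, 0 ≤ w p := fun p => mul_nonneg (hgnn _) (hhnn _)
  have L1 : (∑ m ∈ r.filter (fun m => t ≤ k + m), g m) * (∑ n ∈ r, h n)
      = ∑ p ∈ (r ×ˢ r).filter (fun p => t ≤ k + p.1), w p := by
    rw [Finset.sum_mul_sum, ← Finset.sum_product']
    apply Finset.sum_congr
    · ext p; simp [Finset.mem_filter, Finset.mem_product]; tauto
    · intros; rfl
  have L2 : (∑ n ∈ r.filter (fun n => t ≤ k + 1 + n), h n) * (∑ m ∈ r, g m)
      = ∑ p ∈ (r ×ˢ r).filter (fun p => t ≤ k + 1 + p.2), w p := by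
    rw [mul_comm, Finset.sum_mul_sum, ← Finset.sum_product']
    apply Finset.sum_congr
    · ext p; simp [Finset.mem_filter, Finset.mem_product]; tauto
    · intros; rfl
  rw [L1, L2]
  -- split off the common part
  have split1 : ∑ p ∈ (r ×ˢ r).filter (fun p => t ≤ k + p.1), w p
      = (∑ p ∈ (r ×ˢ r).filter (fun p => (t ≤ k + p.1) ∧ (t ≤ k + 1 + p.2)), w p)
        + ∑ p ∈ (r ×ˢ r).filter (fun p => (t ≤ k + p.1) ∧ ¬(t ≤ k + 1 + p.2)), w p := by
    rw [← Finset.sum_filter_add_sum_filter_not ((r ×ˢ r).filter (fun p => t ≤ k + p.1))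
      (fun p => t ≤ k + 1 + p.2), Finset.filter_filter, Finset.filter_filter]
  have split2 : ∑ p ∈ (r ×ˢ r).filter (fun p => t ≤ k + 1 + p.2), w p
      = (∑ p ∈ (r ×ˢ r).filter (fun p => (t ≤ k + p.1) ∧ (t ≤ k + 1 + p.2)), w p)
        + ∑ p ∈ (r ×ˢ r).filter (fun p => ¬(t ≤ k + p.1) ∧ (t ≤ k + 1 + p.2)), w p := by
    rw [← Finset.sum_filter_add_sum_filter_not ((r ×ˢ r).filter (fun p => t ≤ k + 1 + p.2))
      (fun p => t ≤ k + p.1), Finset.filter_filter, Finset.filter_filter]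
    congr 1
    · apply Finset.sum_congr _ (fun _ _ => rfl)
      apply Finset.filter_congr; intro p _; tauto
    · apply Finset.sum_congr _ (fun _ _ => rfl)
      apply Finset.filter_congr; intro p _; tauto
  rw [split1, split2]
  apply add_le_add_right
  -- the pairing injection
  set S1 := (r ×ˢ r).filter (fun p => (t ≤ k + p.1) ∧ ¬(t ≤ k + 1 + p.2)) with hS1
  set S2 := (r ×ˢ r).filter (fun p => ¬(t ≤ k + p.1) ∧ (t ≤ k + 1 + p.2)) with hS2
  set σ : ℕ × ℕ → ℕ × ℕ := fun p => (p.2 + 1, p.1 - 1) with hσ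
  have hmem : ∀ p ∈ S1, p.1 < N + 1 ∧ p.2 < N + 1 ∧ t ≤ k + p.1 ∧ k + 1 + p.2 < t := by
    intro p hp
    simp only [hS1, Finset.mem_filter, Finset.mem_product, hr, Finset.mem_range] at hp
    omega
  have hmaps : ∀ p ∈ S1, σ p ∈ S2 := by
    intro p hp
    obtain ⟨h1, h2, h3, h4⟩ := hmem p hp
    simp only [hS2, Finset.mem_filter, Finset.mem_product, hr, Finset.mem_range, hσ]
    omega
  have hinj : ∀ p ∈ S1, ∀ q ∈ S1, σ p = σ q → p = q := by
    intro p hp q hq hpq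
    obtain ⟨_, _, hp3, hp4⟩ := hmem p hp
    obtain ⟨_, _, hq3, hq4⟩ := hmem q hq
    simp only [hσ, Prod.mk.injEq] at hpq
    have : p.1 = q.1 ∧ p.2 = q.2 := by omega
    exact Prod.ext this.1 this.2
  have hle : ∀ p ∈ S1, w p ≤ w (σ p) := by
    intro p hp
    obtain ⟨h1, h2, h3, h4⟩ := hmem p hp
    have hmn : p.2 + 2 ≤ p.1 := by omega
    have hbb := logConcave_cross' b hb hblc hmn
    have e1 : k + 1 + (p.1 - 1) = k + p.1 := by omega
    have e2 : k + (p.2 + 1) = k + 1 + p.2 := by omega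
    simp only [hw, hg, hh, hσ, e1, e2]
    have hcc : 0 ≤ c (k + p.1) * c (k + 1 + p.2) :=
      mul_nonneg (hc _) (hc _)
    nlinarith [mul_le_mul_of_nonneg_right hbb hcc]
  calc ∑ p ∈ S1, w p ≤ ∑ p ∈ S1, w (σ p) := Finset.sum_le_sum hle
    _ = ∑ p ∈ S1.image σ, w p := (Finset.sum_image hinj).symm
    _ ≤ ∑ p ∈ S2, w p := by
        apply Finset.sum_le_sum_of_subset_of_nonneg
        · intro p hp
          obtain ⟨q, hq, rfl⟩ := Finset.mem_image.mp hp
          exact hmaps q hq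
        · intro p _ _; exact hwnn p
end

section
/- Let μ be an exchangeable ULC measure on {0,1}^n with rank sequence {a_j}, q_j = a_j / binom(n,j). Then for any fixed coordinate f, the conditional distribution of S = Σ_{e≠f} X_e given X_f = 0 stochastically dominates the conditional distribution of S given X_f = 1. Equivalently, for all k < n: Σ_{r=0}^{k} binom(n-1,r) q_{r+1} / μ(X_f=1) ≥ Σ_{r=0}^{k} binom(n-1,r) q_r / μ(X_f=0). -/
/-!
After cross-multiplying, the CDF inequality at `k` reduces to `q_r q_{s+1} ≤ q_{r+1} q_s` for
`r ≤ k < s`, summed against the weights `binom(n-1,r) binom(n-1,s)`. That inequality says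
`q_{r+1} / q_r` is nonincreasing; it follows from log-concavity by induction on `s`, the interval
support handling the places where `q` vanishes.
-/

open Finset

theorem LogConcaveSeq.mul_succ_le_succ_mul_s10 {q : ℕ → ℝ} (hlc : LogConcaveSeq q)
    (hq : ∀ k, 0 ≤ q k) {r s : ℕ} (hrs : r ≤ s) :
    q r * q (s + 1) ≤ q (r + 1) * q s := by
  induction s, hrs using Nat.le_induction with
  | base => rw [mul_comm]
  | succ s hrs ih =>
    rcases (hq (s + 1)).eq_or_lt with hzero | hpos
    · have hprod : q r * q (s + 2) = 0 := by
        by_contra hne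
        obtain ⟨hr, hs⟩ := mul_ne_zero_iff.mp hne
        exact (hlc.2 r (s + 1) (s + 2) (by omega) (by omega)
          ((hq r).lt_of_ne' hr) ((hq _).lt_of_ne' hs)).ne' hzero.symm
      rw [hprod]
      exact mul_nonneg (hq _) (hq _)
    · refine le_of_mul_le_mul_right ?_ hpos
      calc q r * q (s + 2) * q (s + 1) = q (s + 2) * (q r * q (s + 1)) := by ring
        _ ≤ q (s + 2) * (q (r + 1) * q s) := mul_le_mul_of_nonneg_left ih (hq _)
        _ = q (r + 1) * (q s * q (s + 2)) := by ring
        _ ≤ q (r + 1) * q (s + 1) ^ 2 := mul_le_mul_of_nonneg_left (hlc.1 s) (hq _)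
        _ = q (r + 1) * q (s + 1) * q (s + 1) := by ring

theorem Finset.sum_mul_sum_le_sum_mul_sum_of_mul_le {ι : Type*} (s t : Finset ι)
    (w f g : ι → ℝ) (hw : ∀ i, 0 ≤ w i) (hfg : ∀ i ∈ s, ∀ j ∈ t, f i * g j ≤ g i * f j) :
    (∑ i ∈ s, w i * f i) * ∑ j ∈ t, w j * g j ≤ (∑ i ∈ s, w i * g i) * ∑ j ∈ t, w j * f j := by
  rw [sum_mul_sum, sum_mul_sum]
  refine sum_le_sum fun i hi => sum_le_sum fun j hj => ?_
  have := mul_le_mul_of_nonneg_left (hfg i hi j hj) (mul_nonneg (hw i) (hw j))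
  linarith

theorem stmt_10_general (n : ℕ) (q : ℕ → ℝ)
    (hq : ∀ k, 0 ≤ q k) (hlc : LogConcaveSeq q)
    (hM0 : 0 < ∑ r ∈ Finset.range n, ((n-1).choose r : ℝ) * q r)
    (hM1 : 0 < ∑ r ∈ Finset.range n, ((n-1).choose r : ℝ) * q (r+1)) :
    ∀ k < n,
      (∑ r ∈ Finset.range (k+1), ((n-1).choose r : ℝ) * q r)
          / (∑ r ∈ Finset.range n, ((n-1).choose r : ℝ) * q r)
        ≤ (∑ r ∈ Finset.range (k+1), ((n-1).choose r : ℝ) * q (r+1))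
          / (∑ r ∈ Finset.range n, ((n-1).choose r : ℝ) * q (r+1)) := by
  intro k hk
  have hcross := sum_mul_sum_le_sum_mul_sum_of_mul_le (range (k + 1)) (Ico (k + 1) n)
    (fun r => ((n - 1).choose r : ℝ)) q (fun r => q (r + 1)) (fun _ => by positivity)
    fun r hr s hs => hlc.mul_succ_le_succ_mul_s10 hq (by simp only [mem_range, mem_Ico] at hr hs; omega)
  rw [div_le_div_iff₀ hM0 hM1, ← sum_range_add_sum_Ico _ hk, ← sum_range_add_sum_Ico _ hk]
  linarith

/-- For an exchangeable ULC measure `μ` on `{0,1}ⁿ` with `q_k = a_k / binom(n,k)`, the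
conditional law of `S = Σ_{e≠f} X_e` given `X_f = 0` stochastically dominates its
conditional law given `X_f = 1`; equivalently, for every `k < n` the CDF inequality
`Σ_{r≤k} binom(n-1,r) q_r / μ(X_f=0) ≤ Σ_{r≤k} binom(n-1,r) q_{r+1} / μ(X_f=1)` holds,
where `μ(X_f=0) = Σ_{r<n} binom(n-1,r) q_r` and `μ(X_f=1) = Σ_{r<n} binom(n-1,r) q_{r+1}`. -/
theorem stmt_10 (n : ℕ) (hn : 0 < n) (q : ℕ → ℝ)
    (hq : ∀ k, 0 ≤ q k) (hlc : LogConcaveSeq q)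
    (hsupp : ∀ k, n < k → q k = 0)
    (hprob : ∑ k ∈ Finset.range (n+1), (n.choose k : ℝ) * q k = 1)
    (hM0 : 0 < ∑ r ∈ Finset.range n, ((n-1).choose r : ℝ) * q r)
    (hM1 : 0 < ∑ r ∈ Finset.range n, ((n-1).choose r : ℝ) * q (r+1)) :
    ∀ k < n,
      (∑ r ∈ Finset.range (k+1), ((n-1).choose r : ℝ) * q r)
          / (∑ r ∈ Finset.range n, ((n-1).choose r : ℝ) * q r)
        ≤ (∑ r ∈ Finset.range (k+1), ((n-1).choose r : ℝ) * q (r+1))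
          / (∑ r ∈ Finset.range n, ((n-1).choose r : ℝ) * q (r+1)) :=
  stmt_10_general n q hq hlc hM0 hM1
end

section
/- Let n urns receive k balls independently with i.i.d. locations, and let X_i be the indicator that urn i is nonempty. Then the variables X_1,...,X_n are negatively associated: for every subset A ⊆ {1,...,n} and every pair of increasing events (or bounded increasing functions) f depending only on {X_i : i ∈ A} and g depending only on {X_i : i ∉ A}, E[fg] ≤ E[f]E[g]. -/
/-!
Induct on the number of balls, conditioning on the urn `i` receiving the first one. Given `i`,
the remaining balls form the same model with `f, g` replaced by `f ∘ fill i`, `g ∘ fill i`,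
where `fill i` marks urn `i` occupied; these are still increasing and depend on the same urns,
so the induction hypothesis applies for each `i`. Averaging over `i` reduces the claim to a
covariance inequality for the two functions `i ↦ E[f ∘ fill i]` and `i ↦ E[g ∘ fill i]`:
both dominate their unconditioned values `E f`, `E g`, and at each `i` one of them equals
it, since `fill i` is invisible to `f` when `i ∉ A` and to `g` when `i ∈ A`.
-/

open Finset Function

section Covariance

variable {ι : Type*} [Fintype ι]

theorem sum_mul_le_sum_mul_sum_of_forall_eq_or_eq {p u v : ι → ℝ} {a b : ℝ}
    (hp : ∀ i, 0 ≤ p i) (hp1 : ∑ i, p i = 1) (ha : ∀ i, a ≤ u i) (hb : ∀ i, b ≤ v i)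
    (hab : ∀ i, u i = a ∨ v i = b) :
    ∑ i, p i * (u i * v i) ≤ (∑ i, p i * u i) * (∑ i, p i * v i) := by
  have hsplit : ∀ i, p i * (u i * v i) = a * (p i * v i) + b * (p i * u i) - a * b * p i :=
    fun i => by rcases hab i with h | h <;> rw [h] <;> ring
  have mean_ge {c : ℝ} {w : ι → ℝ} (hw : ∀ i, c ≤ w i) : c ≤ ∑ i, p i * w i :=
    calc c = ∑ i, p i * c := by rw [← sum_mul, hp1, one_mul]
      _ ≤ ∑ i, p i * w i := sum_le_sum fun i _ => mul_le_mul_of_nonneg_left (hw i) (hp i)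
  have hlhs : ∑ i, p i * (u i * v i)
      = a * ∑ i, p i * v i + b * ∑ i, p i * u i - a * b := by
    simp only [hsplit, sum_sub_distrib, sum_add_distrib, ← mul_sum, hp1, mul_one]
  rw [hlhs]
  nlinarith [mul_nonneg (sub_nonneg.2 (mean_ge ha)) (sub_nonneg.2 (mean_ge hb))]

end Covariance

section Update

variable {ι β : Type*} [DecidableEq ι] {α : ι → Type*} {f : (Π i, α i) → β} {s : Set ι}

theorem DependsOn.comp_update (hf : DependsOn f s) (i : ι) (a : α i) :
    DependsOn (fun x => f (Function.update x i a)) s := by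
  intro x y hxy
  refine hf fun j hj => ?_
  rcases eq_or_ne j i with rfl | hji
  · simp
  · simp [update_of_ne hji, hxy j hj]

theorem DependsOn.apply_update_of_notMem (hf : DependsOn f s) {i : ι} (hi : i ∉ s)
    (x : Π i, α i) (a : α i) : f (Function.update x i a) = f x :=
  hf fun _ hj => update_of_ne (ne_of_mem_of_not_mem hj hi) _ _

end Update

namespace Urn

variable {ι : Type*} [DecidableEq ι] {k : ℕ}

def occupied (ω : Fin k → ι) (i : ι) : Bool :=
  decide (∃ j, ω j = i)

theorem occupied_cons (i : ι) (ω : Fin k → ι) :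
    occupied (Fin.cons i ω : Fin (k + 1) → ι) = update (occupied ω) i true := by
  funext m
  rcases eq_or_ne m i with rfl | hmi
  · simp [occupied, Fin.exists_fin_succ]
  · simp [occupied, Fin.exists_fin_succ, update_of_ne hmi, Ne.symm hmi]

variable [Fintype ι]

def expect (p : ι → ℝ) (k : ℕ) (F : (ι → Bool) → ℝ) : ℝ :=
  ∑ ω : Fin k → ι, (∏ j, p (ω j)) * F (occupied ω)

variable {p : ι → ℝ}

theorem expect_zero (F : (ι → Bool) → ℝ) : expect p 0 F = F fun _ => false := by
  simp only [expect, univ_unique, sum_singleton, univ_eq_empty, prod_empty, one_mul]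
  exact congrArg F (funext fun i => by simp [occupied])

theorem expect_succ (F : (ι → Bool) → ℝ) :
    expect p (k + 1) F = ∑ i, p i * expect p k fun x => F (update x i true) := by
  have hcons : ∑ ω : Fin (k + 1) → ι, (∏ j, p (ω j)) * F (occupied ω)
      = ∑ q : ι × (Fin k → ι), (∏ j, p ((Fin.cons q.1 q.2 : Fin (k + 1) → ι) j))
          * F (occupied (Fin.cons q.1 q.2 : Fin (k + 1) → ι)) :=
    (Fintype.sum_equiv (Fin.consEquiv fun _ => ι) _ _ fun _ => rfl).symm
  rw [expect, hcons]
  simp only [Fintype.sum_prod_type, mul_sum, Fin.prod_univ_succ, Fin.cons_zero,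
    Fin.cons_succ, occupied_cons, mul_assoc, expect]

theorem expect_mono (hp : ∀ i, 0 ≤ p i) {F G : (ι → Bool) → ℝ} (hFG : ∀ x, F x ≤ G x) :
    expect p k F ≤ expect p k G :=
  sum_le_sum fun ω _ =>
    mul_le_mul_of_nonneg_left (hFG _) (prod_nonneg fun j _ => hp (ω j))

theorem expect_mul_le (hp : ∀ i, 0 ≤ p i) (hp1 : ∑ i, p i = 1) (k : ℕ) {A : Set ι}
    {f g : (ι → Bool) → ℝ} (hf : Monotone f) (hg : Monotone g)
    (hfA : DependsOn f A) (hgA : DependsOn g Aᶜ) :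
    expect p k (fun x => f x * g x) ≤ expect p k f * expect p k g := by
  induction k generalizing f g with
  | zero => simp only [expect_zero, le_refl]
  | succ k ih =>
    have fill_mono (i : ι) : Monotone fun x : ι → Bool => update x i true :=
      fun _ _ hxy => update_le_update_iff.2 ⟨le_rfl, fun j _ => hxy j⟩
    have fill_ge {F : (ι → Bool) → ℝ} (hF : Monotone F) (i : ι) :
        expect p k F ≤ expect p k fun x => F (update x i true) :=
      expect_mono hp fun x => hF (le_update_self_iff.2 le_top)
    have fill_invisible (i : ι) :
        ((expect p k fun x => f (update x i true)) = expect p k f) ∨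
          ((expect p k fun x => g (update x i true)) = expect p k g) := by
      by_cases hi : i ∈ A
      · exact .inr (congrArg _ (funext fun x => hgA.apply_update_of_notMem (by simpa) x true))
      · exact .inl (congrArg _ (funext fun x => hfA.apply_update_of_notMem hi x true))
    rw [expect_succ, expect_succ, expect_succ]
    calc ∑ i, p i * expect p k (fun x => f (update x i true) * g (update x i true))
        ≤ ∑ i, p i * ((expect p k fun x => f (update x i true))
            * expect p k fun x => g (update x i true)) :=
          sum_le_sum fun i _ => mul_le_mul_of_nonneg_left
            (ih (hf.comp (fill_mono i)) (hg.comp (fill_mono i))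
              (hfA.comp_update i true) (hgA.comp_update i true)) (hp i)
      _ ≤ _ := sum_mul_le_sum_mul_sum_of_forall_eq_or_eq hp hp1 (fill_ge hf) (fill_ge hg)
          fill_invisible

end Urn

/-- Urn model: `k` balls are dropped independently into `n` urns with i.i.d. locations,
and `occ ω i` is the indicator that urn `i` is nonempty.  The occupation indicators are
negatively associated: for every `A ⊆ {1,…,n}` and increasing functions `f` depending
only on coordinates in `A` and `g` depending only on coordinates outside `A`,
`E[f g] ≤ E[f] E[g]`. -/
theorem stmt_15 (n k : ℕ)
    (p : Fin n → ℝ) (hp : ∀ i, 0 ≤ p i) (hp1 : ∑ i, p i = 1)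
    (Pw : (Fin k → Fin n) → ℝ) (hPw : ∀ ω, Pw ω = ∏ j, p (ω j))
    (occ : (Fin k → Fin n) → Fin n → Bool)
    (hocc : ∀ ω i, occ ω i = decide (∃ j, ω j = i)) :
    ∀ (A : Finset (Fin n)) (f g : (Fin n → Bool) → ℝ),
      Monotone f → Monotone g →
      (∀ x y : Fin n → Bool, (∀ i ∈ A, x i = y i) → f x = f y) →
      (∀ x y : Fin n → Bool, (∀ i ∉ A, x i = y i) → g x = g y) →
      (∑ ω, Pw ω * (f (occ ω) * g (occ ω)))
        ≤ (∑ ω, Pw ω * f (occ ω)) * (∑ ω, Pw ω * g (occ ω)) := by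
  intro A f g hf hg hfA hgA
  obtain rfl : Pw = fun ω => ∏ j, p (ω j) := funext hPw
  obtain rfl : occ = Urn.occupied := funext fun ω => funext (hocc ω)
  exact Urn.expect_mul_le hp hp1 k (A := A) hf hg (fun x y => hfA x y) fun x y => hgA x y
end

section
/- Let μ be an exchangeable probability measure on {0,1}^n. Then μ satisfies the negative lattice condition μ(x∨y)μ(x∧y) ≤ μ(x)μ(y) for all x, y ∈ {0,1}^n if and only if the sequence q_k = μ(Σ X_j = k)/binom(n,k) is log-concave on its support with the support being an interval, i.e., the rank sequence of μ is ULC. -/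
open Finset

/-- Indicator function of a finite set of coordinates. -/
def ind {n : ℕ} (s : Finset (Fin n)) : Fin n → Bool := fun i => decide (i ∈ s)

lemma rank_ind {n : ℕ} (s : Finset (Fin n)) : rankB (ind s) = s.card := by
  simp [rankB, ind, Finset.filter_mem_eq_inter]

lemma ind_sup {n : ℕ} (s t : Finset (Fin n)) : ind s ⊔ ind t = ind (s ∪ t) := by
  funext i
  by_cases his : i ∈ s <;> by_cases hit : i ∈ t <;> simp [ind, his, hit]

lemma ind_inf {n : ℕ} (s t : Finset (Fin n)) : ind s ⊓ ind t = ind (s ∩ t) := by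
  funext i
  by_cases his : i ∈ s <;> by_cases hit : i ∈ t <;> simp [ind, his, hit]

lemma eq_ind {n : ℕ} (x : Fin n → Bool) :
    x = ind (univ.filter fun i => x i = true) := by
  funext i
  by_cases hx : x i = true <;> simp [ind, hx]

lemma ratio_mono (n : ℕ) (q : ℕ → ℝ)
    (hlc : ∀ j, j + 2 ≤ n → q j * q (j + 2) ≤ q (j + 1) ^ 2)
    (hint : ∀ i j k, i ≤ j → j ≤ k → k ≤ n → 0 < q i → 0 < q k → 0 < q j)
    (m s : ℕ) (hsn : s ≤ n) (hm : 0 < q m) (hs : 0 < q s) :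
    ∀ u, m ≤ u → u + 1 ≤ s → q m * q (u + 1) ≤ q (m + 1) * q u := by
  intro u
  induction u with
  | zero => intro h1 h2; interval_cases m; exact le_of_eq (mul_comm _ _)
  | succ u ih =>
    intro h1 h2
    rcases Nat.lt_or_ge m (u+1) with hlt | hge
    · have hmu : m ≤ u := by omega
      have ihu := ih hmu (by omega)
      have hqu : 0 < q u := hint m u s hmu (by omega) hsn hm hs
      have hqu1 : 0 < q (u+1) := hint m (u+1) s (by omega) (by omega) hsn hm hs
      have hlcu := hlc u (by omega)
      nlinarith [mul_pos hm hqu1, mul_nonneg hm.le hqu1.le]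
    · have : m = u + 1 := by omega
      subst this; exact le_of_eq (mul_comm _ _)

lemma keyB (n : ℕ) (q : ℕ → ℝ)
    (hqnn : ∀ k, k ≤ n → 0 ≤ q k)
    (hlc : ∀ j, j + 2 ≤ n → q j * q (j + 2) ≤ q (j + 1) ^ 2)
    (hint : ∀ i j k, i ≤ j → j ≤ k → k ≤ n → 0 < q i → 0 < q k → 0 < q j) :
    ∀ d m i j s, m + d = i → i ≤ j → m + s = i + j → s ≤ n →
      q s * q m ≤ q i * q j := by
  intro d
  induction d with
  | zero => intro m i j s h1 h2 h3 h4
            have : m = i := by omega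
            have : s = j := by omega
            subst this; subst ‹m = i›; exact le_of_eq (mul_comm _ _)
  | succ d ih =>
    intro m i j s h1 h2 h3 h4
    have hs : s = j + d + 1 := by omega
    rcases le_or_gt (q m) 0 with hm | hm
    · have : q m = 0 := le_antisymm hm (hqnn m (by omega))
      rw [this, mul_zero]
      exact mul_nonneg (hqnn i (by omega)) (hqnn j (by omega))
    rcases le_or_gt (q s) 0 with hs0 | hs0
    · have : q s = 0 := le_antisymm hs0 (hqnn s h4)
      rw [this, zero_mul]
      exact mul_nonneg (hqnn i (by omega)) (hqnn j (by omega))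
    have hstep : q m * q (j + d + 1) ≤ q (m + 1) * q (j + d) :=
      ratio_mono n q hlc hint m s h4 hm hs0 (j + d) (by omega) (by omega)
    have ihh : q (j + d) * q (m + 1) ≤ q i * q j :=
      ih (m+1) i j (j+d) (by omega) h2 (by omega) (by omega)
    calc q s * q m = q m * q (j + d + 1) := by rw [hs]; ring
      _ ≤ q (m + 1) * q (j + d) := hstep
      _ = q (j + d) * q (m + 1) := mul_comm _ _
      _ ≤ q i * q j := ihh

/-- An exchangeable probability measure `μ` on `{0,1}ⁿ`, assigning probability
`q k = a_k / binom(n,k)` to each point of rank `k`, satisfies the negative lattice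
condition `μ(x∨y) μ(x∧y) ≤ μ(x) μ(y)` for all `x, y` if and only if `{q_k}` is
log-concave on `{0,…,n}` with interval support, i.e. the rank sequence of `μ` is ULC. -/
theorem stmt_17 (n : ℕ) (μ : (Fin n → Bool) → ℝ) (q : ℕ → ℝ)
    (hnn : ∀ η, 0 ≤ μ η) (hsum : ∑ η, μ η = 1)
    (hexch : ∀ η, μ η = q (rankB η)) :
    (∀ x y : Fin n → Bool, μ (x ⊔ y) * μ (x ⊓ y) ≤ μ x * μ y) ↔
      ((∀ j, j + 2 ≤ n → q j * q (j + 2) ≤ q (j + 1) ^ 2) ∧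
        (∀ i j k, i ≤ j → j ≤ k → k ≤ n → 0 < q i → 0 < q k → 0 < q j)) := by
  have hqnn : ∀ k, k ≤ n → 0 ≤ q k := by
    intro k hk
    obtain ⟨s, -, hs⟩ := Finset.exists_subset_card_eq (s := (univ : Finset (Fin n))) (n := k) (by simpa using hk)
    have h := hnn (ind s)
    rwa [hexch, rank_ind, hs] at h
  constructor
  · intro hNLC
    constructor
    · -- log-concavity
      intro j hj
      obtain ⟨C, -, hC⟩ := Finset.exists_subset_card_eq (s := (univ : Finset (Fin n))) (n := j)
        (by simp; omega)
      have h2le : 2 ≤ (univ \ C).card := by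
        rw [Finset.card_sdiff_of_subset (subset_univ C)]
        simp [hC]; omega
      obtain ⟨P, hPsub, hP2⟩ := Finset.exists_subset_card_eq (s := univ \ C) (n := 2) h2le
      obtain ⟨a, b, hab, rfl⟩ := Finset.card_eq_two.mp hP2
      have ha : a ∈ univ \ C := hPsub (by simp)
      have hb : b ∈ univ \ C := hPsub (by simp)
      simp only [mem_sdiff, mem_univ, true_and] at ha hb
      have hst : insert a C ∩ insert b C = C := by
        ext z
        simp only [mem_inter, mem_insert]
        constructor
        · rintro ⟨h1 | h1, h2 | h2⟩
          · subst h1; subst h2; exact absurd rfl hab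
          · exact h2
          · exact h1
          · exact h1
        · intro h; exact ⟨Or.inr h, Or.inr h⟩
      have hun : insert a C ∪ insert b C = insert a (insert b C) := by
        ext z; simp only [mem_union, mem_insert]; tauto
      have ca : (insert a C).card = j + 1 := by rw [card_insert_of_notMem ha]; omega
      have cb : (insert b C).card = j + 1 := by rw [card_insert_of_notMem hb]; omega
      have cu : (insert a (insert b C)).card = j + 2 := by
        rw [card_insert_of_notMem (by simp [hab, ha]), card_insert_of_notMem hb]
        omega
      have h := hNLC (ind (insert a C)) (ind (insert b C))
      rw [ind_sup, ind_inf, hexch, hexch, hexch, hexch, rank_ind, rank_ind, rank_ind,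
        rank_ind, hst, hun, ca, cb, cu, hC] at h
      nlinarith [h]
    · -- interval support
      intro i j k hij hjk hkn hqi hqk
      obtain ⟨C, -, hC⟩ := Finset.exists_subset_card_eq (s := (univ : Finset (Fin n))) (n := k)
        (by simpa using hkn)
      obtain ⟨B, hBC, hB⟩ := Finset.exists_subset_card_eq (s := C) (n := j) (by omega)
      obtain ⟨A, hAB, hA⟩ := Finset.exists_subset_card_eq (s := B) (n := i) (by omega)
      have hinter : B ∩ (A ∪ (C \ B)) = A := by
        ext z
        simp only [mem_inter, mem_union, mem_sdiff]
        constructor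
        · rintro ⟨hzB, hzA | ⟨-, hnB⟩⟩
          · exact hzA
          · exact absurd hzB hnB
        · intro h; exact ⟨hAB h, Or.inl h⟩
      have hunion : B ∪ (A ∪ (C \ B)) = C := by
        ext z
        simp only [mem_union, mem_sdiff]
        constructor
        · rintro (hzB | hzA | ⟨hzC, -⟩)
          · exact hBC hzB
          · exact hBC (hAB hzA)
          · exact hzC
        · intro hzC
          by_cases hzB : z ∈ B
          · exact Or.inl hzB
          · exact Or.inr (Or.inr ⟨hzC, hzB⟩)
      have cy : (A ∪ (C \ B)).card = i + (k - j) := by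
        rw [card_union_of_disjoint, hA, card_sdiff_of_subset hBC, hB, hC]
        exact Finset.disjoint_left.mpr fun z hz hz' => (mem_sdiff.mp hz').2 (hAB hz)
      have h := hNLC (ind B) (ind (A ∪ (C \ B)))
      rw [ind_sup, ind_inf, hexch, hexch, hexch, hexch, rank_ind, rank_ind, rank_ind,
        rank_ind, hinter, hunion, hA, hB, hC, cy] at h
      have hpos : 0 < q j * q (i + (k - j)) := lt_of_lt_of_le (mul_pos hqk hqi) h
      rcases mul_pos_iff.mp hpos with ⟨h1, -⟩ | ⟨h1, -⟩
      · exact h1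
      · exact absurd (hqnn j (by omega)) (not_le.mpr h1)
  · rintro ⟨hlc, hint⟩ x y
    rw [eq_ind x, eq_ind y, ind_sup, ind_inf, hexch, hexch, hexch, hexch,
      rank_ind, rank_ind, rank_ind, rank_ind]
    set sx := univ.filter fun i => x i = true with hsx
    set sy := univ.filter fun i => y i = true with hsy
    have hcards : (sx ∪ sy).card + (sx ∩ sy).card = sx.card + sy.card :=
      Finset.card_union_add_card_inter sx sy
    have hm1 : (sx ∩ sy).card ≤ sx.card := card_le_card inter_subset_left
    have hm2 : (sx ∩ sy).card ≤ sy.card := card_le_card inter_subset_right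
    have hun : (sx ∪ sy).card ≤ n := by
      calc (sx ∪ sy).card ≤ (univ : Finset (Fin n)).card := card_le_card (subset_univ _)
        _ = n := by simp
    rcases le_total sx.card sy.card with hxy | hxy
    · exact keyB n q hqnn hlc hint (sx.card - (sx ∩ sy).card) (sx ∩ sy).card
        sx.card sy.card (sx ∪ sy).card (by omega) hxy (by omega) hun
    · have h := keyB n q hqnn hlc hint (sy.card - (sx ∩ sy).card) (sx ∩ sy).card
        sy.card sx.card (sx ∪ sy).card (by omega) hxy (by omega) hun
      calc q (sx ∪ sy).card * q (sx ∩ sy).card ≤ q sy.card * q sx.card := h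
        _ = q sx.card * q sy.card := mul_comm _ _
end

section
/- Let q_0,...,q_n be a nonnegative log-concave sequence with interval support and let ν_1,...,ν_n be Bernoulli laws with parameters p_e ∈ (0,1). Define a measure μ on {0,1}^n by μ(η) = C q_{|η|} Π_e p_e^{η(e)} (1−p_e)^{1−η(e)}, where |η| = Σ_e η(e) (a rank rescaling of a product of Bernoullis). Then any two distinct coordinates X_e, X_f are negatively correlated under μ: E_μ[X_e X_f] ≤ E_μ[X_e] E_μ[X_f]. -/
/-!
Condition on the coordinates `e` and `f`. With `R = univ \ {e, f}` and
`B c = ∑_{A ⊆ R} q (|A| + c) ∏_{i ∈ A} p i ∏_{i ∈ R \ A} (1 - p i)`, the four sums in the inequality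
are combinations of `B 0, B 1, B 2` with coefficients in `p e, p f`, and the inequality becomes
`p e p f (1 - p e) (1 - p f) (B 1 ^ 2 - B 0 B 2) ≥ 0`. The sequence `B` is log-concave: adding a
coordinate `a` to `R` replaces `B c` by `(1 - p a) B c + p a B (c + 1)`, and this mixture of a
log-concave sequence without internal zeros with its shift is again log-concave without internal
zeros.
-/

open Finset

namespace RankRescaling

structure IsLogConcave (h : ℕ → ℝ) : Prop where
  nonneg : ∀ k, 0 ≤ h k
  mul_le_sq : ∀ k, h k * h (k + 2) ≤ h (k + 1) ^ 2
  ordConnected_support : (Function.support h).OrdConnected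

namespace IsLogConcave

variable {h : ℕ → ℝ}

lemma pos_of_le_of_le (H : IsLogConcave h) {i j k : ℕ} (hij : i ≤ j) (hjk : j ≤ k)
    (hi : 0 < h i) (hk : 0 < h k) : 0 < h j :=
  (H.nonneg j).lt_of_ne' (H.ordConnected_support.out hi.ne' hk.ne' ⟨hij, hjk⟩)

lemma mul_le_mul_shift (H : IsLogConcave h) (k : ℕ) :
    h k * h (k + 3) ≤ h (k + 1) * h (k + 2) := by
  by_cases hmid : 0 < h (k + 1) ∧ 0 < h (k + 2)
  · have hsq := mul_le_mul (H.mul_le_sq k) (H.mul_le_sq (k + 1))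
      (mul_nonneg (H.nonneg _) (H.nonneg _)) (sq_nonneg _)
    refine le_of_mul_le_mul_right ?_ (mul_pos hmid.1 hmid.2)
    calc h k * h (k + 3) * (h (k + 1) * h (k + 2))
        = h k * h (k + 2) * (h (k + 1) * h (k + 3)) := by ring
      _ ≤ h (k + 1) ^ 2 * h (k + 2) ^ 2 := hsq
      _ = h (k + 1) * h (k + 2) * (h (k + 1) * h (k + 2)) := by ring
  · have hend : h k * h (k + 3) = 0 := by
      by_contra hne
      have hk : 0 < h k := (H.nonneg k).lt_of_ne' (left_ne_zero_of_mul hne)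
      have hk3 : 0 < h (k + 3) := (H.nonneg _).lt_of_ne' (right_ne_zero_of_mul hne)
      exact hmid ⟨H.pos_of_le_of_le (by omega) (by omega) hk hk3,
        H.pos_of_le_of_le (by omega) (by omega) hk hk3⟩
    rw [hend]
    exact mul_nonneg (H.nonneg _) (H.nonneg _)

lemma mix (H : IsLogConcave h) {p : ℝ} (hp0 : 0 < p) (hp1 : p < 1) :
    IsLogConcave (fun k => (1 - p) * h k + p * h (k + 1)) where
  nonneg k := by have := H.nonneg k; have := H.nonneg (k + 1); positivity
  mul_le_sq k := by
    have h₁ := H.mul_le_sq k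
    have h₂ : h (k + 1) * h (k + 3) ≤ h (k + 2) ^ 2 := H.mul_le_sq (k + 1)
    have h₃ := H.mul_le_mul_shift k
    show _ * ((1 - p) * h (k + 2) + p * h (k + 3)) ≤ ((1 - p) * h (k + 1) + p * h (k + 2)) ^ 2
    nlinarith [mul_le_mul_of_nonneg_left h₁ (sq_nonneg (1 - p)),
      mul_le_mul_of_nonneg_left h₂ (sq_nonneg p),
      mul_le_mul_of_nonneg_left h₃ (mul_nonneg hp0.le (by linarith : (0:ℝ) ≤ 1 - p))]
  ordConnected_support := by
    have hsupp : ∀ k, (1 - p) * h k + p * h (k + 1) ≠ 0 ↔ 0 < h k ∨ 0 < h (k + 1) := by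
      intro k
      have hx := H.nonneg k
      have hy := H.nonneg (k + 1)
      constructor
      · intro hne
        by_contra! h0
        exact hne (by rw [le_antisymm h0.1 hx, le_antisymm h0.2 hy]; ring)
      · rintro (hx' | hy') <;> apply ne_of_gt
        · nlinarith [mul_pos (sub_pos.2 hp1) hx', mul_nonneg hp0.le hy]
        · nlinarith [mul_pos hp0 hy', mul_nonneg (sub_pos.2 hp1).le hx]
    refine ⟨fun i hi k hk j hj => ?_⟩
    simp only [Function.mem_support, hsupp] at hi hk ⊢
    obtain ⟨i', hi', hii'⟩ : ∃ i', 0 < h i' ∧ i ≤ i' ∧ i' ≤ i + 1 := by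
      rcases hi with hi | hi
      exacts [⟨i, hi, le_rfl, by omega⟩, ⟨i + 1, hi, by omega, le_rfl⟩]
    obtain ⟨k', hk', hkk'⟩ : ∃ k', 0 < h k' ∧ k ≤ k' := by
      rcases hk with hk | hk
      exacts [⟨k, hk, le_rfl⟩, ⟨k + 1, hk, by omega⟩]
    by_cases hi'j : i' ≤ j
    · exact Or.inl (H.pos_of_le_of_le hi'j (hj.2.trans hkk') hi' hk')
    · obtain rfl : i' = j + 1 := by have := hj.1; omega
      exact Or.inr hi'

end IsLogConcave

def truncate (n : ℕ) (q : ℕ → ℝ) : ℕ → ℝ := fun k => if k ≤ n then q k else 0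

lemma isLogConcave_truncate {n : ℕ} {q : ℕ → ℝ} (hq0 : ∀ k, 0 ≤ q k)
    (hlc1 : ∀ j, j + 2 ≤ n → q j * q (j + 2) ≤ q (j + 1) ^ 2)
    (hlc2 : ∀ i j k, i ≤ j → j ≤ k → k ≤ n → 0 < q i → 0 < q k → 0 < q j) :
    IsLogConcave (truncate n q) where
  nonneg k := by unfold truncate; split_ifs; exacts [hq0 k, le_rfl]
  mul_le_sq k := by
    by_cases hk : k + 2 ≤ n
    · simp only [truncate, if_pos hk, if_pos (show k ≤ n by omega),
        if_pos (show k + 1 ≤ n by omega)]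
      exact hlc1 k hk
    · simp only [truncate, if_neg hk, mul_zero]
      exact sq_nonneg _
  ordConnected_support := by
    refine ⟨fun i hi k hk j hj => ?_⟩
    simp only [Function.mem_support, truncate, ne_eq, ite_eq_right_iff, not_forall] at hi hk ⊢
    obtain ⟨hkn, hk⟩ := hk
    obtain ⟨-, hi⟩ := hi
    refine ⟨hj.2.trans hkn, (hlc2 i j k hj.1 hj.2 hkn ?_ ?_).ne'⟩
    · exact (hq0 i).lt_of_ne' hi
    · exact (hq0 k).lt_of_ne' hk

section Partition

variable {ι : Type*} [DecidableEq ι] (h : ℕ → ℝ) (p : ι → ℝ)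

def rankWeight (s : Finset ι) (c : ℕ) (A : Finset ι) : ℝ :=
  h (#A + c) * (∏ i ∈ A, p i) * ∏ i ∈ s \ A, (1 - p i)

/-- The partition function of the configurations on `s`, with `c` further coordinates
(outside `s`) set to `1`. -/
def rankPartition (s : Finset ι) (c : ℕ) : ℝ :=
  ∑ A ∈ s.powerset, rankWeight h p s c A

variable {h p}

lemma rankWeight_insert_of_subset {a : ι} {s A : Finset ι} (ha : a ∉ s) (hA : A ⊆ s) (c : ℕ) :
    rankWeight h p (insert a s) c A = (1 - p a) * rankWeight h p s c A := by
  rw [rankWeight, rankWeight, insert_sdiff_of_notMem _ (fun haA => ha (hA haA)),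
    prod_insert (fun haA => ha (mem_sdiff.1 haA).1)]
  ring

lemma rankWeight_union {T s B : Finset ι} (hB : B ⊆ s \ T) (c : ℕ) :
    rankWeight h p s c (T ∪ B) = (∏ i ∈ T, p i) * rankWeight h p (s \ T) (c + #T) B := by
  have hTB : Disjoint T B := disjoint_of_subset_right hB disjoint_sdiff
  rw [rankWeight, rankWeight, card_union_of_disjoint hTB, prod_union hTB, sdiff_union_distrib,
    Finset.sdiff_sdiff_left', add_comm #T, add_assoc, add_comm #T]
  ring

lemma rankPartition_insert {a : ι} {s : Finset ι} (ha : a ∉ s) (c : ℕ) :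
    rankPartition h p (insert a s) c
      = (1 - p a) * rankPartition h p s c + p a * rankPartition h p s (c + 1) := by
  rw [rankPartition, sum_powerset_insert ha, rankPartition, rankPartition, mul_sum, mul_sum]
  congr 1 <;> refine sum_congr rfl fun A hA => ?_
  · exact rankWeight_insert_of_subset ha (mem_powerset.1 hA) c
  · have hs : insert a s \ {a} = s := by rw [sdiff_singleton_eq_erase, erase_insert ha]
    have hA' : A ⊆ insert a s \ {a} := by rw [hs]; exact mem_powerset.1 hA
    rw [insert_eq a A, rankWeight_union hA', hs, prod_singleton, card_singleton]

lemma rankPartition_of_mem {a : ι} {s : Finset ι} (ha : a ∈ s) (c : ℕ) :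
    rankPartition h p s c
      = (1 - p a) * rankPartition h p (s \ {a}) c + p a * rankPartition h p (s \ {a}) (c + 1) := by
  conv_lhs => rw [← insert_sdiff_self_of_mem ha]
  exact rankPartition_insert (by simp) c

lemma sum_filter_superset_rankWeight {T U : Finset ι} (hT : T ⊆ U) (c : ℕ) :
    ∑ A ∈ U.powerset with T ⊆ A, rankWeight h p U c A
      = (∏ i ∈ T, p i) * rankPartition h p (U \ T) (c + #T) := by
  rw [rankPartition, mul_sum]
  symm
  refine sum_nbij' (T ∪ ·) (· \ T) (fun B hB => ?_) (fun A hA => ?_) (fun B hB => ?_)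
    (fun A hA => ?_) (fun B hB => (rankWeight_union (mem_powerset.1 hB) c).symm)
  · have hB := mem_powerset.1 hB
    simp only [mem_filter, mem_powerset]
    exact ⟨union_subset hT (hB.trans sdiff_subset), subset_union_left⟩
  · simp only [mem_filter, mem_powerset] at hA ⊢
    exact sdiff_subset_sdiff hA.1 le_rfl
  · exact union_sdiff_cancel_left (disjoint_of_subset_right (mem_powerset.1 hB) disjoint_sdiff)
  · exact union_sdiff_of_subset (mem_filter.1 hA).2

lemma isLogConcave_rankPartition (H : IsLogConcave h) (hp : ∀ i, 0 < p i ∧ p i < 1)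
    (s : Finset ι) : IsLogConcave (rankPartition h p s) := by
  induction s using Finset.induction_on with
  | empty =>
    convert H using 1
    funext c
    simp [rankPartition, rankWeight]
  | insert a s ha ih =>
    rw [show rankPartition h p (insert a s) = _ from funext (rankPartition_insert ha)]
    exact ih.mix (hp a).1 (hp a).2

variable {U : Finset ι} {e f : ι}

lemma sdiff_pair_eq (a b : ι) : (U \ {a}) \ {b} = U \ {a, b} := by
  rw [sdiff_sdiff_left, sup_eq_union, ← insert_eq]

lemma rankPartition_eq_of_pair_mem (he : e ∈ U) (hf : f ∈ U) (hef : e ≠ f) (c : ℕ) :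
    rankPartition h p U c
      = (1 - p e) * ((1 - p f) * rankPartition h p (U \ {e, f}) c
          + p f * rankPartition h p (U \ {e, f}) (c + 1))
        + p e * ((1 - p f) * rankPartition h p (U \ {e, f}) (c + 1)
          + p f * rankPartition h p (U \ {e, f}) (c + 2)) := by
  have hf' : f ∈ U \ {e} := by simp [hf, hef.symm]
  rw [rankPartition_of_mem he, rankPartition_of_mem hf', rankPartition_of_mem hf', sdiff_pair_eq]

lemma sum_filter_pair_subset_rankWeight (he : e ∈ U) (hf : f ∈ U) (hef : e ≠ f) (c : ℕ) :
    ∑ A ∈ U.powerset with {e, f} ⊆ A, rankWeight h p U c A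
      = p e * p f * rankPartition h p (U \ {e, f}) (c + 2) := by
  rw [sum_filter_superset_rankWeight (insert_subset he (singleton_subset_iff.2 hf)),
    prod_pair hef, card_pair hef]

lemma sum_filter_singleton_subset_rankWeight (he : e ∈ U) (hf : f ∈ U) (hef : e ≠ f) (c : ℕ) :
    ∑ A ∈ U.powerset with {e} ⊆ A, rankWeight h p U c A
      = p e * ((1 - p f) * rankPartition h p (U \ {e, f}) (c + 1)
          + p f * rankPartition h p (U \ {e, f}) (c + 2)) := by
  have hf' : f ∈ U \ {e} := by simp [hf, hef.symm]
  rw [sum_filter_superset_rankWeight (singleton_subset_iff.2 he), prod_singleton, card_singleton,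
    rankPartition_of_mem hf', sdiff_pair_eq]

end Partition

section Configurations

variable {ι : Type*} [Fintype ι] [DecidableEq ι]

def trueSet (η : ι → Bool) : Finset ι := univ.filter (η · = true)

lemma bijective_trueSet : Function.Bijective (trueSet : (ι → Bool) → Finset ι) :=
  Function.bijective_iff_has_inverse.2
    ⟨fun A i => decide (i ∈ A), fun η => by funext i; simp [trueSet],
      fun A => by ext i; simp [trueSet]⟩

lemma sum_comp_trueSet (g : Finset ι → ℝ) : ∑ η, g (trueSet η) = ∑ A, g A :=
  Fintype.sum_bijective _ bijective_trueSet _ _ fun _ => rfl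

lemma sum_filter_comp_trueSet {Q : (ι → Bool) → Prop} {P : Finset ι → Prop} [DecidablePred Q]
    [DecidablePred P] (hQP : ∀ η, Q η ↔ P (trueSet η)) (g : Finset ι → ℝ) :
    ∑ η with Q η, g (trueSet η) = ∑ A with P A, g A := by
  simp only [sum_filter, hQP]
  exact sum_comp_trueSet fun A => if P A then g A else 0

end Configurations

lemma mul_prod_ite_eq_rankWeight {n : ℕ} (q : ℕ → ℝ) (p : Fin n → ℝ) (η : Fin n → Bool) :
    q (rankB η) * ∏ i, (if η i then p i else 1 - p i)
      = rankWeight (truncate n q) p univ 0 (trueSet η) := by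
  have hcard : #(trueSet η) ≤ n := (card_le_univ _).trans_eq (Fintype.card_fin n)
  rw [rankWeight, truncate, add_zero, if_pos hcard, prod_ite, filter_not, mul_assoc]
  rfl

lemma div_le_div_mul_div_of_mul_le_sq {a b B₀ B₁ B₂ Z : ℝ} (ha₀ : 0 ≤ a) (ha₁ : a ≤ 1)
    (hb₀ : 0 ≤ b) (hb₁ : b ≤ 1) (hB : B₀ * B₂ ≤ B₁ ^ 2)
    (hZ_eq : Z = (1 - a) * ((1 - b) * B₀ + b * B₁) + a * ((1 - b) * B₁ + b * B₂)) (hZ : 0 < Z) :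
    a * b * B₂ / Z ≤ a * ((1 - b) * B₁ + b * B₂) / Z * (b * ((1 - a) * B₁ + a * B₂) / Z) := by
  rw [div_mul_div_comm, div_le_div_iff₀ hZ (mul_pos hZ hZ), mul_comm Z, ← mul_assoc]
  refine mul_le_mul_of_nonneg_right ?_ hZ.le
  have hcoef : 0 ≤ a * b * (1 - a) * (1 - b) := by
    have := sub_nonneg.2 ha₁; have := sub_nonneg.2 hb₁; positivity
  -- the difference of the two sides is `a b (1 - a) (1 - b) (B₁² - B₀ B₂)`
  subst hZ_eq
  nlinarith [mul_le_mul_of_nonneg_left hB hcoef]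

end RankRescaling

open RankRescaling in
/-- Rank rescaling of a product of Bernoullis: let `q_0,…,q_n` be a nonnegative
log-concave sequence with interval support and `p_e ∈ (0,1)`, and let
`μ(η) = C q_{|η|} Π_e p_e^{η(e)} (1-p_e)^{1-η(e)}`.  Then any two distinct coordinates are
negatively correlated under `μ`: `E[X_e X_f] ≤ E[X_e] E[X_f]`. -/
theorem stmt_19 (n : ℕ) (q : ℕ → ℝ) (p : Fin n → ℝ)
    (hq0 : ∀ k, 0 ≤ q k)
    (hlc1 : ∀ j, j + 2 ≤ n → q j * q (j + 2) ≤ q (j + 1) ^ 2)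
    (hlc2 : ∀ i j k, i ≤ j → j ≤ k → k ≤ n → 0 < q i → 0 < q k → 0 < q j)
    (hp : ∀ i, 0 < p i ∧ p i < 1)
    (e f : Fin n) (hef : e ≠ f)
    (hZ : 0 < ∑ η : Fin n → Bool, q (rankB η) * ∏ i, (if η i then p i else 1 - p i)) :
    (∑ η ∈ univ.filter (fun η : Fin n → Bool => η e = true ∧ η f = true),
        q (rankB η) * ∏ i, (if η i then p i else 1 - p i))
      / (∑ η : Fin n → Bool, q (rankB η) * ∏ i, (if η i then p i else 1 - p i))
    ≤ ((∑ η ∈ univ.filter (fun η : Fin n → Bool => η e = true),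
          q (rankB η) * ∏ i, (if η i then p i else 1 - p i))
        / (∑ η : Fin n → Bool, q (rankB η) * ∏ i, (if η i then p i else 1 - p i)))
      * ((∑ η ∈ univ.filter (fun η : Fin n → Bool => η f = true),
          q (rankB η) * ∏ i, (if η i then p i else 1 - p i))
        / (∑ η : Fin n → Bool, q (rankB η) * ∏ i, (if η i then p i else 1 - p i))) := by
  simp only [mul_prod_ite_eq_rankWeight] at hZ ⊢
  rw [sum_filter_comp_trueSet (P := ({e, f} ⊆ ·)) (by simp [trueSet, insert_subset_iff]),
    sum_filter_comp_trueSet (P := ({e} ⊆ ·)) (by simp [trueSet]),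
    sum_filter_comp_trueSet (P := ({f} ⊆ ·)) (by simp [trueSet]), sum_comp_trueSet,
    ← powerset_univ, ← rankPartition]
  rw [sum_comp_trueSet, ← powerset_univ, ← rankPartition] at hZ
  have hB := isLogConcave_rankPartition (isLogConcave_truncate hq0 hlc1 hlc2) hp (univ \ {e, f})
  rw [sum_filter_pair_subset_rankWeight (mem_univ e) (mem_univ f) hef,
    sum_filter_singleton_subset_rankWeight (mem_univ e) (mem_univ f) hef,
    sum_filter_singleton_subset_rankWeight (mem_univ f) (mem_univ e) hef.symm, pair_comm f e]
  exact div_le_div_mul_div_of_mul_le_sq (hp e).1.le (hp e).2.le (hp f).1.le (hp f).2.le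
    (hB.mul_le_sq 0) (rankPartition_eq_of_pair_mem (mem_univ e) (mem_univ f) hef 0) hZ
end
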